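/- arXiv:2208.10604 — 12 statements merged into one kernel-verified Lean document; each statement's English description precedes it below -/
import Mathlib

section
/- Let G be a group and suppose some constant δ ∈ (0,1) witnesses the strong Erdős–Hajnal property for triple products in G. Then there is a constant c₀ > 0 such that, for any α ∈ (0,1), there is some ε ∈ (0,1) with the following property: every finite subset Y ⊆ G of size at least 8/α contains subsets U, V, W ⊆ Y, all of size at least ε·|Y|^(c₀+1)/|Y³|^(c₀), such that |U·V·W| ≤ α·|Y|. -/
open Finset Pointwise

/-- A finite subset `A` of a group is product-free if `x * y ∉ A` for all `x, y ∈ A`. -/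
def ProductFree {G : Type*} [Group G] (A : Finset G) : Prop :=
  ∀ x ∈ A, ∀ y ∈ A, x * y ∉ A

/-- `δ` witnesses the strong Erdős–Hajnal property for the triple-product relation
`x₁x₂x₃ = y₁y₂y₃` in the group `G`. -/
def TripleSEH (G : Type*) [Group G] (δ : ℝ) : Prop :=
  ∀ U₁ U₂ U₃ V₁ V₂ V₃ : Finset G,
    ∃ U₁' ⊆ U₁, ∃ U₂' ⊆ U₂, ∃ U₃' ⊆ U₃, ∃ V₁' ⊆ V₁, ∃ V₂' ⊆ V₂, ∃ V₃' ⊆ V₃,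
      δ * U₁.card ≤ U₁'.card ∧ δ * U₂.card ≤ U₂'.card ∧ δ * U₃.card ≤ U₃'.card ∧
      δ * V₁.card ≤ V₁'.card ∧ δ * V₂.card ≤ V₂'.card ∧ δ * V₃.card ≤ V₃'.card ∧
      ((∀ u₁ ∈ U₁', ∀ u₂ ∈ U₂', ∀ u₃ ∈ U₃', ∀ v₁ ∈ V₁', ∀ v₂ ∈ V₂', ∀ v₃ ∈ V₃',
          u₁ * u₂ * u₃ = v₁ * v₂ * v₃) ∨
       (∀ u₁ ∈ U₁', ∀ u₂ ∈ U₂', ∀ u₃ ∈ U₃', ∀ v₁ ∈ V₁', ∀ v₂ ∈ V₂', ∀ v₃ ∈ V₃',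
          u₁ * u₂ * u₃ ≠ v₁ * v₂ * v₃))

/-
Iterating the strong Erdős–Hajnal property on `Y, Y, Y` and applying it to two copies of the
current triple, one either finds subsets all of whose triple products coincide (so their product
set has at most one element) or subsets whose product sets are disjoint inside the current one,
so that the smaller of the two has at most half its size. After `k ≈ log₂ (|Y³| / (α |Y|))`
rounds the product set has size at most `α |Y|`, while the sets have lost a factor
`δ ^ k ≈ (α |Y| / |Y³|) ^ c₀` with `c₀ = log₂ (1 / δ)`.
-/

lemma card_le_one_or_two_mul_card_le_of_subset {α : Type*} [DecidableEq α]
    {P Q S : Finset α} (hP : P ⊆ S) (hQ : Q ⊆ S)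
    (h : (∀ p ∈ P, ∀ q ∈ Q, p = q) ∨ Disjoint P Q) :
    (P.card ≤ 1 ∨ 2 * P.card ≤ S.card) ∨ (Q.card ≤ 1 ∨ 2 * Q.card ≤ S.card) := by
  rcases h with heq | hdisj
  · obtain rfl | ⟨p, hp⟩ := P.eq_empty_or_nonempty
    · simp
    · exact Or.inr <| Or.inl <| card_le_one.mpr fun a ha b hb ↦
        (heq p hp a ha).symm.trans (heq p hp b hb)
  · have := card_union_of_disjoint hdisj ▸ card_le_card (union_subset hP hQ)
    omega

section TripleProducts

variable {G : Type*} [Group G] [DecidableEq G] {δ : ℝ}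

lemma forall_mem_mul_mul {P : G → Prop} {U₁ U₂ U₃ : Finset G} :
    (∀ x ∈ U₁ * U₂ * U₃, P x) ↔ ∀ u₁ ∈ U₁, ∀ u₂ ∈ U₂, ∀ u₃ ∈ U₃, P (u₁ * u₂ * u₃) := by
  refine ⟨fun h u₁ hu₁ u₂ hu₂ u₃ hu₃ ↦ h _ (mul_mem_mul (mul_mem_mul hu₁ hu₂) hu₃), ?_⟩
  intro h x hx
  obtain ⟨y, hy, u₃, hu₃, rfl⟩ := mem_mul.mp hx
  obtain ⟨u₁, hu₁, u₂, hu₂, rfl⟩ := mem_mul.mp hy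
  exact h u₁ hu₁ u₂ hu₂ u₃ hu₃

lemma TripleSEH.exists_subsets_card_mul_mul_le (hSEH : TripleSEH G δ) (A B C : Finset G) :
    ∃ A' ⊆ A, ∃ B' ⊆ B, ∃ C' ⊆ C,
      δ * A.card ≤ A'.card ∧ δ * B.card ≤ B'.card ∧ δ * C.card ≤ C'.card ∧
      ((A' * B' * C').card ≤ 1 ∨ 2 * (A' * B' * C').card ≤ (A * B * C).card) := by
  obtain ⟨U₁, hU₁, U₂, hU₂, U₃, hU₃, V₁, hV₁, V₂, hV₂, V₃, hV₃,
    hcU₁, hcU₂, hcU₃, hcV₁, hcV₂, hcV₃, hrel⟩ := hSEH A B C A B C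
  have hrel' : (∀ p ∈ U₁ * U₂ * U₃, ∀ q ∈ V₁ * V₂ * V₃, p = q) ∨
      Disjoint (U₁ * U₂ * U₃) (V₁ * V₂ * V₃) := by
    simpa only [disjoint_iff_ne, forall_mem_mul_mul] using hrel
  rcases card_le_one_or_two_mul_card_le_of_subset (mul_subset_mul (mul_subset_mul hU₁ hU₂) hU₃)
    (mul_subset_mul (mul_subset_mul hV₁ hV₂) hV₃) hrel' with hU | hV
  · exact ⟨U₁, hU₁, U₂, hU₂, U₃, hU₃, hcU₁, hcU₂, hcU₃, hU⟩
  · exact ⟨V₁, hV₁, V₂, hV₂, V₃, hV₃, hcV₁, hcV₂, hcV₃, hV⟩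

lemma TripleSEH.exists_subsets_card_mul_mul_le_pow (hSEH : TripleSEH G δ) (hδ : 0 ≤ δ)
    (A B C : Finset G) (k : ℕ) :
    ∃ A' ⊆ A, ∃ B' ⊆ B, ∃ C' ⊆ C,
      δ ^ k * A.card ≤ A'.card ∧ δ ^ k * B.card ≤ B'.card ∧ δ ^ k * C.card ≤ C'.card ∧
      ((A' * B' * C').card ≤ 1 ∨ 2 ^ k * (A' * B' * C').card ≤ (A * B * C).card) := by
  induction k with
  | zero => exact ⟨A, subset_rfl, B, subset_rfl, C, subset_rfl, by simp⟩
  | succ k ih =>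
    obtain ⟨A₁, hA₁, B₁, hB₁, C₁, hC₁, hcA₁, hcB₁, hcC₁, hprod₁⟩ := ih
    obtain ⟨A₂, hA₂, B₂, hB₂, C₂, hC₂, hcA₂, hcB₂, hcC₂, hprod₂⟩ :=
      hSEH.exists_subsets_card_mul_mul_le A₁ B₁ C₁
    have hshrink {X X₁ X₂ : Finset G} (h₁ : δ ^ k * X.card ≤ X₁.card)
        (h₂ : δ * X₁.card ≤ X₂.card) : δ ^ (k + 1) * X.card ≤ X₂.card := by
      rw [pow_succ', mul_assoc]
      exact (mul_le_mul_of_nonneg_left h₁ hδ).trans h₂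
    refine ⟨A₂, hA₂.trans hA₁, B₂, hB₂.trans hB₁, C₂, hC₂.trans hC₁,
      hshrink hcA₁ hcA₂, hshrink hcB₁ hcB₂, hshrink hcC₁ hcC₂, ?_⟩
    have hmono : (A₂ * B₂ * C₂).card ≤ (A₁ * B₁ * C₁).card := card_le_card (by gcongr)
    rw [pow_succ]
    rcases hprod₁ with h₁ | h₁
    · exact Or.inl (hmono.trans h₁)
    rcases hprod₂ with h₂ | h₂
    · exact Or.inl h₂
    · exact Or.inr <| calc 2 ^ k * 2 * (A₂ * B₂ * C₂).card
          _ ≤ 2 ^ k * (A₁ * B₁ * C₁).card := by rw [mul_assoc]; gcongr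
          _ ≤ (A * B * C).card := h₁

end TripleProducts

lemma mul_rpow_logb_le_pow {δ x : ℝ} {k : ℕ} (hδ₀ : 0 < δ) (hδ₁ : δ ≤ 1) (hx : 0 < x)
    (hk : (2 : ℝ) ^ k ≤ 2 * x) : δ * x ^ Real.logb 2 δ ≤ δ ^ k := by
  have hδ : (2 : ℝ) ^ Real.logb 2 δ = δ := Real.rpow_logb two_pos (by norm_num) hδ₀
  calc δ * x ^ Real.logb 2 δ = (2 * x) ^ Real.logb 2 δ := by
        rw [Real.mul_rpow zero_le_two hx.le, hδ]
    _ ≤ ((2 : ℝ) ^ k) ^ Real.logb 2 δ :=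
        Real.rpow_le_rpow_of_nonpos (by positivity) hk (Real.logb_nonpos one_lt_two hδ₀.le hδ₁)
    _ = δ ^ k := by rw [← Real.rpow_pow_comm zero_le_two, hδ]

lemma mul_rpow_div_rpow_le_pow_mul {δ α n N : ℝ} {k : ℕ} (hδ₀ : 0 < δ) (hδ₁ : δ ≤ 1)
    (hα : 0 < α) (hn : 0 < n) (hN : 0 < N) (hk : (2 : ℝ) ^ k ≤ 2 * (N / (α * n))) :
    δ * α ^ (-Real.logb 2 δ) * n ^ (-Real.logb 2 δ + 1) / N ^ (-Real.logb 2 δ) ≤ δ ^ k * n :=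
  calc _ = δ * (N / (α * n)) ^ Real.logb 2 δ * n := by
        rw [Real.div_rpow hN.le (by positivity), Real.mul_rpow hα.le hn.le, Real.rpow_add hn,
          Real.rpow_one, Real.rpow_neg hα.le, Real.rpow_neg hn.le, Real.rpow_neg hN.le]
        field_simp
    _ ≤ δ ^ k * n := by
        gcongr
        exact mul_rpow_logb_le_pow hδ₀ hδ₁ (by positivity) hk

theorem stmt2 {G : Type*} [Group G] [DecidableEq G] (δ : ℝ) (hδ : δ ∈ Set.Ioo (0 : ℝ) 1)
    (hSEH : TripleSEH G δ) :
    ∃ c₀ : ℝ, 0 < c₀ ∧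
      ∀ α ∈ Set.Ioo (0 : ℝ) 1, ∃ ε ∈ Set.Ioo (0 : ℝ) 1,
        ∀ Y : Finset G, 8 / α ≤ (Y.card : ℝ) →
          ∃ U ⊆ Y, ∃ V ⊆ Y, ∃ W ⊆ Y,
            ε * (Y.card : ℝ) ^ (c₀ + 1) / ((Y ^ 3 : Finset G).card : ℝ) ^ c₀ ≤ U.card ∧
            ε * (Y.card : ℝ) ^ (c₀ + 1) / ((Y ^ 3 : Finset G).card : ℝ) ^ c₀ ≤ V.card ∧
            ε * (Y.card : ℝ) ^ (c₀ + 1) / ((Y ^ 3 : Finset G).card : ℝ) ^ c₀ ≤ W.card ∧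
            ((U * V * W).card : ℝ) ≤ α * Y.card := by
  obtain ⟨hδ₀, hδ₁⟩ := hδ
  have hlog : Real.logb 2 δ < 0 := Real.logb_neg one_lt_two hδ₀ hδ₁
  refine ⟨-Real.logb 2 δ, neg_pos.mpr hlog, fun α ⟨hα₀, hα₁⟩ ↦ ?_⟩
  refine ⟨δ * α ^ (-Real.logb 2 δ), ⟨by positivity, ?_⟩, fun Y hY ↦ ?_⟩
  · exact mul_lt_one_of_nonneg_of_lt_one_left hδ₀.le hδ₁
      (Real.rpow_le_one hα₀.le hα₁.le (neg_nonneg.mpr hlog.le))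
  have hαn : 8 ≤ α * Y.card := by rwa [div_le_iff₀' hα₀] at hY
  have hn : (0 : ℝ) < Y.card := pos_of_mul_pos_right (by linarith) hα₀.le
  have hnN : (Y.card : ℝ) ≤ (Y ^ 3).card := by exact_mod_cast card_le_card_pow three_ne_zero
  have hN : (0 : ℝ) < (Y ^ 3).card := hn.trans_le hnN
  obtain ⟨m, hm, hxm⟩ := exists_nat_pow_near (x := (Y ^ 3).card / (α * Y.card))
    ((one_le_div (by positivity)).mpr (by nlinarith)) one_lt_two
  obtain ⟨U, hU, V, hV, W, hW, hcU, hcV, hcW, hprod⟩ :=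
    hSEH.exists_subsets_card_mul_mul_le_pow hδ₀.le Y Y Y (m + 1)
  have hsize := mul_rpow_div_rpow_le_pow_mul hδ₀ hδ₁.le hα₀ hn hN (k := m + 1)
    (by rw [pow_succ]; linarith)
  refine ⟨U, hU, V, hV, W, hW, hsize.trans hcU, hsize.trans hcV, hsize.trans hcW, ?_⟩
  rw [← pow_three'] at hprod
  rcases hprod with hle | hle
  · exact (Nat.cast_le_one.mpr hle).trans (by linarith)
  · rw [div_lt_iff₀ (by positivity)] at hxm
    have hlt : (2 : ℝ) ^ (m + 1) * (U * V * W).card < 2 ^ (m + 1) * (α * Y.card) :=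
      lt_of_le_of_lt (by exact_mod_cast hle) hxm
    exact (lt_of_mul_lt_mul_left hlt (by positivity)).le
end

section
/- Let G be a group and suppose some constant δ ∈ (0,1) witnesses the strong Erdős–Hajnal property for triple products in G. Then there are constants c₁ > 0 and ε₁ ∈ (0,1) such that every finite subset Y ⊆ G of size at least 16 contains a subset Z ⊆ Y, of size at least ε₁·|Y|^(c₁+1)/|Y³|^(c₁), such that |Z⁻¹·Z·Z⁻¹| ≤ |Y|/2. -/
open Finset Pointwise

/-!
Applying the strong Erdős–Hajnal property to `(A, B, C, A, B, C)` either collapses the product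
set of dense subtriples to a point or produces two dense subtriples with disjoint product sets
inside `A * B * C`; either way some dense subtriple has at most half as many products. Halving
`k ≈ log₂ (|Y³| / |Y|)` times from `(Y, Y, Y)` gives `A, B, C ⊆ Y` of size at least `δᵏ |Y|`
with `|ABC| ≤ |Y| / 2`. Averaging over the fibres of `(a, b, c) ↦ (ab, bc)` then yields `Z ⊆ B`
with `|A| |B| |C| ≤ |Z| |ABC|²` and `Z⁻¹ Z Z⁻¹` inside a two-sided translate of `ABC`, while
the choice of `k` gives `δᵏ ≥ δ² (|Y| / |Y³|) ^ log₂ (1 / δ)`.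
-/

lemma Real.rpow_logb_le_pow {b δ x : ℝ} (hb : 1 < b) (hδ0 : 0 < δ) (hδ1 : δ ≤ 1) {k : ℕ}
    (hk : b ^ k ≤ x) : x ^ Real.logb b δ ≤ δ ^ k :=
  calc x ^ Real.logb b δ ≤ (b ^ k) ^ Real.logb b δ :=
        Real.rpow_le_rpow_of_nonpos (by positivity) hk (Real.logb_nonpos hb hδ0.le hδ1)
    _ = δ ^ k := by
        rw [← Real.rpow_natCast, ← Real.rpow_mul (by positivity), mul_comm,
          Real.rpow_mul (by positivity), Real.rpow_logb (by positivity) hb.ne' hδ0,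
          Real.rpow_natCast]

lemma Finset.Nonempty.of_mul_card_le {α : Type*} {δ : ℝ} (hδ : 0 < δ) {S T : Finset α}
    (hS : S.Nonempty) (h : δ * #S ≤ #T) : T.Nonempty := by
  have : (0 : ℝ) < #T := (by have := hS.card_pos; positivity : (0 : ℝ) < δ * #S).trans_le h
  exact Finset.card_pos.1 (by exact_mod_cast this)

section

variable {G : Type*} [Group G] [DecidableEq G]

namespace Finset

lemma exists_of_mem_mul_mul {A B C : Finset G} {x : G} (hx : x ∈ A * B * C) :
    ∃ a ∈ A, ∃ b ∈ B, ∃ c ∈ C, a * b * c = x := by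
  obtain ⟨y, hy, c, hc, rfl⟩ := mem_mul.1 hx
  obtain ⟨a, ha, b, hb, rfl⟩ := mem_mul.1 hy
  exact ⟨a, ha, b, hb, c, hc, rfl⟩

/-- The middle factors `b` of the representations `x = a * b`, `y = b * c` with
`a ∈ A`, `b ∈ B`, `c ∈ C`. -/
def midFactors (A B C : Finset G) (x y : G) : Finset G :=
  {b ∈ B | x * b⁻¹ ∈ A ∧ b⁻¹ * y ∈ C}

lemma card_mul_card_mul_card_le_sum_card_midFactors (A B C : Finset G) :
    #A * #B * #C ≤ ∑ p ∈ (A * B) ×ˢ (B * C), #(midFactors A B C p.1 p.2) := by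
  rw [← card_product, ← card_product, ← card_sigma]
  refine card_le_card_of_injOn (fun t => ⟨(t.1.1 * t.1.2, t.1.2 * t.2), t.1.2⟩) ?_ ?_
  · rintro ⟨⟨a, b⟩, c⟩ h
    simp only [coe_product, Set.mem_prod, mem_coe] at h
    obtain ⟨⟨ha, hb⟩, hc⟩ := h
    simp only [coe_sigma, Set.mem_sigma_iff, mem_coe, mem_product, midFactors, mem_filter,
      mul_inv_cancel_right, inv_mul_cancel_left]
    exact ⟨⟨mul_mem_mul ha hb, mul_mem_mul hb hc⟩, hb, ha, hc⟩
  · rintro ⟨⟨a, b⟩, c⟩ - ⟨⟨a', b'⟩, c'⟩ - h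
    simp only [Sigma.mk.inj_iff, Prod.mk.injEq, heq_eq_eq] at h
    obtain ⟨⟨hab, hbc⟩, rfl⟩ := h
    rw [mul_right_cancel hab, mul_left_cancel hbc]

lemma inv_mul_mul_inv_midFactors_subset (A B C : Finset G) (x y : G) :
    (midFactors A B C x y)⁻¹ * midFactors A B C x y * (midFactors A B C x y)⁻¹ ⊆
      {x⁻¹} * (A * B * C) * {y⁻¹} := by
  intro w hw
  obtain ⟨z₁', hz₁', z₂, hz₂, z₃', hz₃', rfl⟩ := exists_of_mem_mul_mul hw
  obtain ⟨z₁, hz₁, rfl⟩ := mem_inv.1 hz₁'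
  obtain ⟨z₃, hz₃, rfl⟩ := mem_inv.1 hz₃'
  simp only [midFactors, mem_filter] at hz₁ hz₂ hz₃
  have hw : z₁⁻¹ * z₂ * z₃⁻¹ = x⁻¹ * (x * z₁⁻¹ * z₂ * (z₃⁻¹ * y)) * y⁻¹ := by group
  rw [hw]
  exact mul_mem_mul (mul_mem_mul (mem_singleton_self _)
    (mul_mem_mul (mul_mem_mul hz₁.2.1 hz₂.1) hz₃.2.2)) (mem_singleton_self _)

theorem exists_subset_card_inv_mul_mul_inv_le (A B C : Finset G) :
    ∃ Z ⊆ B, #A * #B * #C ≤ #Z * #(A * B * C) ^ 2 ∧ #(Z⁻¹ * Z * Z⁻¹) ≤ #(A * B * C) := by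
  have hcount := card_mul_card_mul_card_le_sum_card_midFactors A B C
  set s := (A * B) ×ˢ (B * C)
  rcases s.eq_empty_or_nonempty with hs | hs
  · exact ⟨∅, empty_subset _, by simpa [hs] using hcount, by simp⟩
  obtain ⟨hAB, hBC⟩ := nonempty_product.1 hs
  obtain ⟨p, -, hmax⟩ := s.exists_max_image (fun p => #(midFactors A B C p.1 p.2)) hs
  refine ⟨midFactors A B C p.1 p.2, filter_subset _ _, ?_, ?_⟩
  · calc #A * #B * #C ≤ #s * #(midFactors A B C p.1 p.2) := by
          simpa using hcount.trans (sum_le_card_nsmul s _ _ hmax)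
      _ = #(midFactors A B C p.1 p.2) * (#(A * B) * #(B * C)) := by rw [card_product, mul_comm]
      _ ≤ #(midFactors A B C p.1 p.2) * #(A * B * C) ^ 2 := by
        rw [sq]
        exact Nat.mul_le_mul_left _ (Nat.mul_le_mul (card_le_card_mul_right hBC.of_mul_right)
          ((card_le_card_mul_left hAB.of_mul_left).trans_eq (by rw [mul_assoc])))
  · calc _ ≤ #({p.1⁻¹} * (A * B * C) * {p.2⁻¹}) :=
          card_le_card (inv_mul_mul_inv_midFactors_subset A B C p.1 p.2)
      _ = #(A * B * C) := by rw [card_mul_singleton, card_singleton_mul]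

end Finset

namespace TripleSEH

variable {δ : ℝ}

theorem exists_dense_subsets_two_mul_card_mul_le (hSEH : TripleSEH G δ) (hδ : 0 < δ)
    {A B C : Finset G} (h2 : 2 ≤ #(A * B * C)) :
    ∃ A' ⊆ A, ∃ B' ⊆ B, ∃ C' ⊆ C, δ * #A ≤ #A' ∧ δ * #B ≤ #B' ∧ δ * #C ≤ #C' ∧
      2 * #(A' * B' * C') ≤ #(A * B * C) := by
  obtain ⟨U₁, hU₁, U₂, hU₂, U₃, hU₃, V₁, hV₁, V₂, hV₂, V₃, hV₃,
    hcU₁, hcU₂, hcU₃, hcV₁, hcV₂, hcV₃, hall | hnone⟩ := hSEH A B C A B C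
  · have hABC : (A * B * C).Nonempty := card_pos.1 (by omega)
    obtain ⟨v₁, hv₁⟩ := hABC.of_mul_left.of_mul_left.of_mul_card_le hδ hcV₁
    obtain ⟨v₂, hv₂⟩ := hABC.of_mul_left.of_mul_right.of_mul_card_le hδ hcV₂
    obtain ⟨v₃, hv₃⟩ := hABC.of_mul_right.of_mul_card_le hδ hcV₃
    have hpoint : U₁ * U₂ * U₃ ⊆ {v₁ * v₂ * v₃} := fun x hx => by
      obtain ⟨u₁, hu₁, u₂, hu₂, u₃, hu₃, rfl⟩ := exists_of_mem_mul_mul hx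
      exact mem_singleton.2 (hall u₁ hu₁ u₂ hu₂ u₃ hu₃ v₁ hv₁ v₂ hv₂ v₃ hv₃)
    have := card_le_card hpoint
    rw [card_singleton] at this
    exact ⟨U₁, hU₁, U₂, hU₂, U₃, hU₃, hcU₁, hcU₂, hcU₃, by omega⟩
  · have hdisj : Disjoint (U₁ * U₂ * U₃) (V₁ * V₂ * V₃) := disjoint_left.2 fun x hx hx' => by
      obtain ⟨u₁, hu₁, u₂, hu₂, u₃, hu₃, rfl⟩ := exists_of_mem_mul_mul hx
      obtain ⟨v₁, hv₁, v₂, hv₂, v₃, hv₃, huv⟩ := exists_of_mem_mul_mul hx'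
      exact hnone u₁ hu₁ u₂ hu₂ u₃ hu₃ v₁ hv₁ v₂ hv₂ v₃ hv₃ huv.symm
    have hsum : #(U₁ * U₂ * U₃) + #(V₁ * V₂ * V₃) ≤ #(A * B * C) := by
      rw [← card_union_of_disjoint hdisj]
      exact card_le_card (union_subset (mul_subset_mul (mul_subset_mul hU₁ hU₂) hU₃)
        (mul_subset_mul (mul_subset_mul hV₁ hV₂) hV₃))
    rcases le_total #(U₁ * U₂ * U₃) #(V₁ * V₂ * V₃) with hle | hle
    · exact ⟨U₁, hU₁, U₂, hU₂, U₃, hU₃, hcU₁, hcU₂, hcU₃, by omega⟩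
    · exact ⟨V₁, hV₁, V₂, hV₂, V₃, hV₃, hcV₁, hcV₂, hcV₃, by omega⟩

theorem exists_dense_subsets_card_mul_le_max (hSEH : TripleSEH G δ) (hδ0 : 0 < δ)
    (hδ1 : δ ≤ 1) (A₀ B₀ C₀ : Finset G) (k : ℕ) :
    ∃ A ⊆ A₀, ∃ B ⊆ B₀, ∃ C ⊆ C₀,
      δ ^ k * #A₀ ≤ #A ∧ δ ^ k * #B₀ ≤ #B ∧ δ ^ k * #C₀ ≤ #C ∧
      (#(A * B * C) : ℝ) ≤ max ((#(A₀ * B₀ * C₀) : ℝ) / 2 ^ k) 1 := by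
  induction k with
  | zero => exact ⟨A₀, subset_rfl, B₀, subset_rfl, C₀, subset_rfl, by simp, by simp, by simp,
      by simp⟩
  | succ k ih =>
    obtain ⟨A, hA, B, hB, C, hC, hcA, hcB, hcC, hABC⟩ := ih
    rcases le_or_gt #(A * B * C) 1 with hle | hgt
    · have hweaken {S₀ S : Finset G} (h : δ ^ k * #S₀ ≤ #S) : δ ^ (k + 1) * #S₀ ≤ #S :=
        (mul_le_mul_of_nonneg_right (pow_le_pow_of_le_one hδ0.le hδ1 k.le_succ)
          (Nat.cast_nonneg _)).trans h
      exact ⟨A, hA, B, hB, C, hC, hweaken hcA, hweaken hcB, hweaken hcC,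
        le_max_of_le_right (by exact_mod_cast hle)⟩
    · obtain ⟨A', hA', B', hB', C', hC', hcA', hcB', hcC', hhalf⟩ :=
        hSEH.exists_dense_subsets_two_mul_card_mul_le hδ0 hgt
      have hshrink {S₀ S S' : Finset G} (h : δ ^ k * #S₀ ≤ #S) (h' : δ * #S ≤ #S') :
          δ ^ (k + 1) * #S₀ ≤ #S' := by
        rw [pow_succ', mul_assoc]
        exact (mul_le_mul_of_nonneg_left h hδ0.le).trans h'
      refine ⟨A', hA'.trans hA, B', hB'.trans hB, C', hC'.trans hC, hshrink hcA hcA',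
        hshrink hcB hcB', hshrink hcC hcC', le_max_of_le_left ?_⟩
      have hgtR : (1 : ℝ) < #(A * B * C) := by exact_mod_cast hgt
      have hhalfR : 2 * (#(A' * B' * C') : ℝ) ≤ #(A * B * C) := by exact_mod_cast hhalf
      have hABC' : (#(A * B * C) : ℝ) ≤ #(A₀ * B₀ * C₀) / 2 ^ k :=
        (le_max_iff.1 hABC).resolve_right hgtR.not_ge
      rw [pow_succ, ← div_div]
      linarith

theorem exists_subset_card_inv_mul_mul_inv_le_half (hSEH : TripleSEH G δ) (hδ0 : 0 < δ)
    (hδ1 : δ ≤ 1) {Y : Finset G} (hY : 2 ≤ #Y) {k : ℕ}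
    (hk : 2 * (#(Y ^ 3) : ℝ) ≤ 2 ^ k * #Y) :
    ∃ Z ⊆ Y, (δ ^ k) ^ 3 * #Y ≤ #Z ∧ (#(Z⁻¹ * Z * Z⁻¹) : ℝ) ≤ #Y / 2 := by
  obtain ⟨A, -, B, hB, C, -, hcA, hcB, hcC, hABC⟩ :=
    hSEH.exists_dense_subsets_card_mul_le_max hδ0 hδ1 Y Y Y k
  obtain ⟨Z, hZ, hcount, hsmall⟩ := Finset.exists_subset_card_inv_mul_mul_inv_le A B C
  have hYR : (2 : ℝ) ≤ #Y := by exact_mod_cast hY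
  have hABC' : (#(A * B * C) : ℝ) ≤ #Y / 2 := by
    refine hABC.trans (max_le ?_ (by linarith))
    rw [← pow_three', div_le_div_iff₀ (by positivity) two_pos]
    linarith
  refine ⟨Z, hZ.trans hB, ?_, le_trans (by exact_mod_cast hsmall) hABC'⟩
  refine le_of_mul_le_mul_right ?_ (by positivity : (0 : ℝ) < #Y ^ 2)
  calc (δ ^ k) ^ 3 * #Y * #Y ^ 2 = (δ ^ k * #Y) * (δ ^ k * #Y) * (δ ^ k * #Y) := by ring
    _ ≤ #A * #B * #C := by gcongr
    _ ≤ #Z * #(A * B * C) ^ 2 := by exact_mod_cast hcount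
    _ ≤ #Z * (#Y / 2) ^ 2 := by gcongr
    _ ≤ #Z * #Y ^ 2 := by gcongr; linarith

end TripleSEH

end

theorem stmt3 {G : Type*} [Group G] [DecidableEq G] (δ : ℝ) (hδ : δ ∈ Set.Ioo (0 : ℝ) 1)
    (hSEH : TripleSEH G δ) :
    ∃ c₁ ε₁ : ℝ, 0 < c₁ ∧ ε₁ ∈ Set.Ioo (0 : ℝ) 1 ∧
      ∀ Y : Finset G, 16 ≤ Y.card →
        ∃ Z ⊆ Y,
          ε₁ * (Y.card : ℝ) ^ (c₁ + 1) / ((Y ^ 3 : Finset G).card : ℝ) ^ c₁ ≤ Z.card ∧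
          ((Z⁻¹ * Z * Z⁻¹).card : ℝ) ≤ (Y.card : ℝ) / 2 := by
  obtain ⟨hδ0, hδ1⟩ := hδ
  set ℓ := Real.logb 2 δ
  refine ⟨-3 * ℓ, δ ^ 6, by linarith [Real.logb_neg one_lt_two hδ0 hδ1],
    ⟨by positivity, pow_lt_one₀ hδ0.le hδ1 (by norm_num)⟩, fun Y hY => ?_⟩
  have hn : (16 : ℝ) ≤ #Y := by exact_mod_cast hY
  have hnP : (#Y : ℝ) ≤ #(Y ^ 3) := by exact_mod_cast card_le_card_pow three_ne_zero
  set n : ℝ := ((#Y : ℕ) : ℝ)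
  set P : ℝ := ((#(Y ^ 3) : ℕ) : ℝ)
  obtain ⟨j, hj_le, hj_lt⟩ := exists_nat_pow_near ((one_le_div₀ (by linarith)).2 hnP) one_lt_two
  rw [div_lt_iff₀ (by linarith)] at hj_lt
  obtain ⟨Z, hZY, hZcard, hZsmall⟩ := hSEH.exists_subset_card_inv_mul_mul_inv_le_half hδ0
    hδ1.le (Y := Y) (by omega) (k := j + 2) (by rw [pow_succ (2 : ℝ) (j + 1)]; linarith)
  refine ⟨Z, hZY, ?_, hZsmall⟩
  have hn0 : 0 < n := by linarith
  calc δ ^ 6 * n ^ (-3 * ℓ + 1) / P ^ (-3 * ℓ) = (δ ^ 2 * (P / n) ^ ℓ) ^ 3 * n := by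
        rw [Real.rpow_add hn0, Real.rpow_one, neg_mul, Real.rpow_neg hn0.le,
          Real.rpow_neg (by linarith), mul_pow, ← pow_mul, ← Real.rpow_natCast ((P / n) ^ ℓ),
          ← Real.rpow_mul (by positivity), Real.div_rpow (by linarith) hn0.le]
        push_cast
        rw [mul_comm ℓ 3]
        field_simp
    _ ≤ (δ ^ (j + 2)) ^ 3 * n := by
        rw [pow_add δ j 2, mul_comm (δ ^ j)]
        gcongr
        exact Real.rpow_logb_le_pow one_lt_two hδ0 hδ1.le hj_le
    _ ≤ #Z := hZcard
end

section
/- Let G be a group and let U₁, U₂, U₃, V₁, V₂, V₃ be finite subsets of G, each of size at least 2. If the tuple (U₁,U₂,U₃,V₁,V₂,V₃) is homogeneous for the relation x₁x₂x₃ = y₁y₂y₃ — that is, either u₁u₂u₃ = v₁v₂v₃ for all uᵢ ∈ Uᵢ and vᵢ ∈ Vᵢ, or u₁u₂u₃ ≠ v₁v₂v₃ for all uᵢ ∈ Uᵢ and vᵢ ∈ Vᵢ — then the product sets U₁·U₂·U₃ and V₁·V₂·V₃ are disjoint. -/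
open Finset Pointwise

theorem stmt4 {G : Type*} [Group G] [DecidableEq G]
    (U₁ U₂ U₃ V₁ V₂ V₃ : Finset G)
    (hU₁ : 2 ≤ U₁.card) (hU₂ : 2 ≤ U₂.card) (hU₃ : 2 ≤ U₃.card)
    (hV₁ : 2 ≤ V₁.card) (hV₂ : 2 ≤ V₂.card) (hV₃ : 2 ≤ V₃.card)
    (hhom : (∀ u₁ ∈ U₁, ∀ u₂ ∈ U₂, ∀ u₃ ∈ U₃, ∀ v₁ ∈ V₁, ∀ v₂ ∈ V₂, ∀ v₃ ∈ V₃,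
        u₁ * u₂ * u₃ = v₁ * v₂ * v₃) ∨
      (∀ u₁ ∈ U₁, ∀ u₂ ∈ U₂, ∀ u₃ ∈ U₃, ∀ v₁ ∈ V₁, ∀ v₂ ∈ V₂, ∀ v₃ ∈ V₃,
        u₁ * u₂ * u₃ ≠ v₁ * v₂ * v₃)) :
    Disjoint (U₁ * U₂ * U₃) (V₁ * V₂ * V₃) := by
  rcases hhom with heq | hne
  · exfalso
    obtain ⟨a, ha, b, hb, hab⟩ := Finset.one_lt_card.mp hU₁
    obtain ⟨u₂, hu₂⟩ := Finset.card_pos.mp (by omega : 0 < U₂.card)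
    obtain ⟨u₃, hu₃⟩ := Finset.card_pos.mp (by omega : 0 < U₃.card)
    obtain ⟨v₁, hv₁⟩ := Finset.card_pos.mp (by omega : 0 < V₁.card)
    obtain ⟨v₂, hv₂⟩ := Finset.card_pos.mp (by omega : 0 < V₂.card)
    obtain ⟨v₃, hv₃⟩ := Finset.card_pos.mp (by omega : 0 < V₃.card)
    have h1 := heq a ha u₂ hu₂ u₃ hu₃ v₁ hv₁ v₂ hv₂ v₃ hv₃
    have h2 := heq b hb u₂ hu₂ u₃ hu₃ v₁ hv₁ v₂ hv₂ v₃ hv₃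
    exact hab (mul_right_cancel (mul_right_cancel (h1.trans h2.symm)))
  · rw [Finset.disjoint_left]
    rintro x hx hy
    rw [Finset.mem_mul] at hx hy
    obtain ⟨y, hy', u₃, hu₃, rfl⟩ := hx
    rw [Finset.mem_mul] at hy'
    obtain ⟨u₁, hu₁, u₂, hu₂, rfl⟩ := hy'
    obtain ⟨z, hz', v₃, hv₃, hzv⟩ := hy
    rw [Finset.mem_mul] at hz'
    obtain ⟨v₁, hv₁, v₂, hv₂, rfl⟩ := hz'
    exact hne u₁ hu₁ u₂ hu₂ u₃ hu₃ v₁ hv₁ v₂ hv₂ v₃ hv₃ hzv.symm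
end

section
/- Let G be a group and suppose some constant δ ∈ (0,1) witnesses the strong Erdős–Hajnal property for triple products in G. Then any finite subsets W₁, W₂, W₃ ⊆ G, all of size at least 2, contain respective subsets U₁ ⊆ W₁, U₂ ⊆ W₂, U₃ ⊆ W₃ with |Uᵢ| ≥ δ·|Wᵢ| for each i and with |U₁·U₂·U₃| ≤ |W₁·W₂·W₃|/2. -/
open Finset Pointwise

theorem stmt5 {G : Type*} [Group G] [DecidableEq G] (δ : ℝ) (hδ : δ ∈ Set.Ioo (0 : ℝ) 1)
    (hSEH : TripleSEH G δ)
    (W₁ W₂ W₃ : Finset G) (hW₁ : 2 ≤ W₁.card) (hW₂ : 2 ≤ W₂.card) (hW₃ : 2 ≤ W₃.card) :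
    ∃ U₁ ⊆ W₁, ∃ U₂ ⊆ W₂, ∃ U₃ ⊆ W₃,
      δ * W₁.card ≤ U₁.card ∧ δ * W₂.card ≤ U₂.card ∧ δ * W₃.card ≤ U₃.card ∧
      ((U₁ * U₂ * U₃).card : ℝ) ≤ ((W₁ * W₂ * W₃).card : ℝ) / 2 := by
  obtain ⟨U₁, hU₁, U₂, hU₂, U₃, hU₃, V₁, hV₁, V₂, hV₂, V₃, hV₃,
    c₁, c₂, c₃, d₁, d₂, d₃, h⟩ := hSEH W₁ W₂ W₃ W₁ W₂ W₃
  have pos : ∀ (W X : Finset G), 2 ≤ W.card → δ * W.card ≤ X.card → X.Nonempty := by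
    intro W X hW hX
    rw [← Finset.card_pos]
    have hWc : (0:ℝ) < W.card := by exact_mod_cast (by omega : 0 < W.card)
    have : (0:ℝ) < X.card := lt_of_lt_of_le (mul_pos hδ.1 hWc) hX
    exact_mod_cast this
  have hU₁n := pos W₁ U₁ hW₁ c₁
  have hU₂n := pos W₂ U₂ hW₂ c₂
  have hU₃n := pos W₃ U₃ hW₃ c₃
  have hV₁n := pos W₁ V₁ hW₁ d₁
  have hV₂n := pos W₂ V₂ hW₂ d₂
  have hV₃n := pos W₃ V₃ hW₃ d₃
  have hPsub : U₁ * U₂ * U₃ ⊆ W₁ * W₂ * W₃ :=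
    mul_subset_mul (mul_subset_mul hU₁ hU₂) hU₃
  have hQsub : V₁ * V₂ * V₃ ⊆ W₁ * W₂ * W₃ :=
    mul_subset_mul (mul_subset_mul hV₁ hV₂) hV₃
  rcases h with heq | hne
  · -- product set is a singleton
    obtain ⟨v₁, hv₁⟩ := hV₁n; obtain ⟨v₂, hv₂⟩ := hV₂n; obtain ⟨v₃, hv₃⟩ := hV₃n
    have hsub : U₁ * U₂ * U₃ ⊆ {v₁ * v₂ * v₃} := by
      intro x hx
      obtain ⟨y, hy, u₃, hu₃, rfl⟩ := Finset.mem_mul.1 hx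
      obtain ⟨u₁, hu₁, u₂, hu₂, rfl⟩ := Finset.mem_mul.1 hy
      simp [heq u₁ hu₁ u₂ hu₂ u₃ hu₃ v₁ hv₁ v₂ hv₂ v₃ hv₃]
    have h1 : (U₁ * U₂ * U₃).card ≤ 1 := (Finset.card_le_card hsub).trans (by simp)
    have h2 : 2 ≤ (W₁ * W₂ * W₃).card := by
      calc 2 ≤ W₁.card := hW₁
        _ ≤ (W₁ * W₂).card := card_le_card_mul_right (Finset.card_pos.1 (by omega))
        _ ≤ (W₁ * W₂ * W₃).card := card_le_card_mul_right (Finset.card_pos.1 (by omega))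
    refine ⟨U₁, hU₁, U₂, hU₂, U₃, hU₃, c₁, c₂, c₃, ?_⟩
    have : ((U₁ * U₂ * U₃).card : ℝ) ≤ 1 := by exact_mod_cast h1
    have h2' : (2:ℝ) ≤ (W₁ * W₂ * W₃).card := by exact_mod_cast h2
    linarith
  · -- disjoint product sets
    have hdisj : Disjoint (U₁ * U₂ * U₃) (V₁ * V₂ * V₃) := by
      rw [Finset.disjoint_left]
      intro x hx hx'
      obtain ⟨y, hy, u₃, hu₃, rfl⟩ := Finset.mem_mul.1 hx
      obtain ⟨u₁, hu₁, u₂, hu₂, rfl⟩ := Finset.mem_mul.1 hy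
      obtain ⟨z, hz, v₃, hv₃, hzz⟩ := Finset.mem_mul.1 hx'
      obtain ⟨v₁, hv₁, v₂, hv₂, rfl⟩ := Finset.mem_mul.1 hz
      exact hne u₁ hu₁ u₂ hu₂ u₃ hu₃ v₁ hv₁ v₂ hv₂ v₃ hv₃ hzz.symm
    have hsum : (U₁ * U₂ * U₃).card + (V₁ * V₂ * V₃).card ≤ (W₁ * W₂ * W₃).card := by
      rw [← Finset.card_union_of_disjoint hdisj]
      exact Finset.card_le_card (Finset.union_subset hPsub hQsub)
    rcases le_total (U₁ * U₂ * U₃).card (V₁ * V₂ * V₃).card with hle | hle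
    · refine ⟨U₁, hU₁, U₂, hU₂, U₃, hU₃, c₁, c₂, c₃, ?_⟩
      have : 2 * (U₁ * U₂ * U₃).card ≤ (W₁ * W₂ * W₃).card := by omega
      have : (2:ℝ) * (U₁ * U₂ * U₃).card ≤ (W₁ * W₂ * W₃).card := by exact_mod_cast this
      linarith
    · refine ⟨V₁, hV₁, V₂, hV₂, V₃, hV₃, d₁, d₂, d₃, ?_⟩
      have : 2 * (V₁ * V₂ * V₃).card ≤ (W₁ * W₂ * W₃).card := by omega
      have : (2:ℝ) * (V₁ * V₂ * V₃).card ≤ (W₁ * W₂ * W₃).card := by exact_mod_cast this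
      linarith
end

section
/- Let G be a group and let U, V, W be finite subsets of G. Then the sum over all pairs (g,h) with g ∈ U·V and h ∈ V·W of the cardinality |U⁻¹g ∩ V ∩ hW⁻¹| equals |U|·|V|·|W|. (Equivalently, the map (u,v,w) ↦ (uv, vw, v) is a bijection from U×V×W onto the set of triples (g,h,z) with z ∈ U⁻¹g ∩ V ∩ hW⁻¹.) -/
/-!
Count the triples `(g, h, z)` by their last coordinate: `z ∈ U⁻¹g ∩ hW⁻¹` says exactly that
`g ∈ Uz` and `h ∈ zW`, and for `z ∈ V` these cosets lie inside `UV` and `VW`. So each `z ∈ V`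
contributes `|Uz| · |zW| = |U| · |W|`.
-/

open Finset Pointwise

theorem Finset.sum_sum_card_filter_and {α β γ : Type*} (S : Finset α) (T : Finset β)
    (V : Finset γ) (P : α → γ → Prop) (Q : β → γ → Prop)
    [∀ a z, Decidable (P a z)] [∀ b z, Decidable (Q b z)] :
    ∑ a ∈ S, ∑ b ∈ T, #{z ∈ V | P a z ∧ Q b z}
      = ∑ z ∈ V, #{a ∈ S | P a z} * #{b ∈ T | Q b z} := by
  simp only [card_filter, sum_mul_sum, ite_zero_mul_ite_zero, mul_one]
  exact (sum_congr rfl fun _ _ => sum_comm).trans sum_comm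

section Group

variable {G : Type*} [Group G] [DecidableEq G]

theorem Finset.mem_inv_mul_singleton_iff {U : Finset G} {g z : G} :
    z ∈ U⁻¹ * {g} ↔ g ∈ U * {z} := by
  simp only [mem_mul, mem_inv', mem_singleton, exists_eq_left]
  constructor
  · rintro ⟨u, hu, rfl⟩
    exact ⟨u⁻¹, hu, by group⟩
  · rintro ⟨u, hu, rfl⟩
    exact ⟨u⁻¹, by simpa using hu, by group⟩

theorem Finset.mem_singleton_mul_inv_iff {W : Finset G} {h z : G} :
    z ∈ {h} * W⁻¹ ↔ h ∈ {z} * W := by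
  simp only [mem_mul, mem_inv', mem_singleton, exists_eq_left]
  constructor
  · rintro ⟨w, hw, rfl⟩
    exact ⟨w⁻¹, hw, by group⟩
  · rintro ⟨w, hw, rfl⟩
    exact ⟨w⁻¹, by simpa using hw, by group⟩

theorem Finset.card_filter_mem_mul_singleton {U V : Finset G} {z : G} (hz : z ∈ V) :
    #{g ∈ U * V | g ∈ U * {z}} = #U := by
  rw [filter_mem_eq_inter, inter_eq_right.mpr (mul_subset_mul_left (singleton_subset_iff.mpr hz)),
    card_mul_singleton]

theorem Finset.card_filter_mem_singleton_mul {V W : Finset G} {z : G} (hz : z ∈ V) :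
    #{h ∈ V * W | h ∈ {z} * W} = #W := by
  rw [filter_mem_eq_inter, inter_eq_right.mpr (mul_subset_mul_right (singleton_subset_iff.mpr hz)),
    card_singleton_mul]

end Group

theorem stmt6 {G : Type*} [Group G] [DecidableEq G] (U V W : Finset G) :
    ∑ g ∈ U * V, ∑ h ∈ V * W, ((U⁻¹ * {g}) ∩ V ∩ ({h} * W⁻¹)).card
      = U.card * V.card * W.card := by
  have fiber (g h : G) :
      (U⁻¹ * {g}) ∩ V ∩ ({h} * W⁻¹) = {z ∈ V | g ∈ U * {z} ∧ h ∈ {z} * W} := by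
    ext z
    simp only [mem_inter, mem_filter, mem_inv_mul_singleton_iff, mem_singleton_mul_inv_iff]
    tauto
  simp only [fiber, sum_sum_card_filter_and]
  rw [sum_congr rfl fun z hz => by
    rw [card_filter_mem_mul_singleton hz, card_filter_mem_singleton_mul hz], sum_const, smul_eq_mul]
  ring
end

section
/- Let G be a group and let U, V, W be nonempty finite subsets of G. Then there exist elements g, h ∈ G such that |U⁻¹g ∩ V ∩ hW⁻¹| ≥ |U|·|V|·|W| / (|U·V|·|V·W|). -/
open Finset Pointwise

theorem stmt7 {G : Type*} [Group G] [DecidableEq G] (U V W : Finset G)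
    (hU : U.Nonempty) (hV : V.Nonempty) (hW : W.Nonempty) :
    ∃ g h : G,
      (U.card : ℝ) * V.card * W.card / (((U * V).card : ℝ) * ((V * W).card : ℝ))
        ≤ ((U⁻¹ * {g}) ∩ V ∩ ({h} * W⁻¹)).card := by
  classical
  set S := (U * V) ×ˢ (V * W) with hS
  have memiff1 : ∀ g v : G, v ∈ U⁻¹ * {g} ↔ g ∈ U * {v} := by
    intro g v
    rw [Finset.mem_mul, Finset.mem_mul]
    constructor
    · rintro ⟨y, hy, z, hz, rfl⟩
      rw [Finset.mem_inv] at hy; obtain ⟨u, hu, rfl⟩ := hy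
      rw [Finset.mem_singleton] at hz; subst hz
      exact ⟨u, hu, u⁻¹ * z, Finset.mem_singleton_self _, by group⟩
    · rintro ⟨u, hu, z, hz, rfl⟩
      rw [Finset.mem_singleton] at hz; subst hz
      exact ⟨u⁻¹, Finset.mem_inv.2 ⟨u, hu, rfl⟩, u * z, Finset.mem_singleton_self _, by group⟩
  have memiff2 : ∀ h v : G, v ∈ {h} * W⁻¹ ↔ h ∈ {v} * W := by
    intro h v
    rw [Finset.mem_mul, Finset.mem_mul]
    constructor
    · rintro ⟨z, hz, y, hy, rfl⟩
      rw [Finset.mem_singleton] at hz; subst hz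
      rw [Finset.mem_inv] at hy; obtain ⟨w, hw, rfl⟩ := hy
      exact ⟨z * w⁻¹, Finset.mem_singleton_self _, w, hw, by group⟩
    · rintro ⟨z, hz, w, hw, rfl⟩
      rw [Finset.mem_singleton] at hz; subst hz
      exact ⟨z * w, Finset.mem_singleton_self _, w⁻¹, Finset.mem_inv.2 ⟨w, hw, rfl⟩, by group⟩
  have key : ∑ p ∈ S, ((U⁻¹ * {p.1}) ∩ V ∩ ({p.2} * W⁻¹)).card
      = U.card * V.card * W.card := by
    have hcard : ∀ p : G × G, ((U⁻¹ * {p.1}) ∩ V ∩ ({p.2} * W⁻¹)).card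
        = ∑ v ∈ V, (if v ∈ U⁻¹ * {p.1} ∧ v ∈ {p.2} * W⁻¹ then 1 else 0) := by
      intro p
      have heq : (U⁻¹ * {p.1}) ∩ V ∩ ({p.2} * W⁻¹)
          = V.filter (fun v => v ∈ U⁻¹ * {p.1} ∧ v ∈ {p.2} * W⁻¹) := by
        ext v
        simp only [Finset.mem_inter, Finset.mem_filter]
        tauto
      rw [heq, Finset.card_filter]
    simp_rw [hcard]
    rw [Finset.sum_comm]
    have : ∀ v ∈ V, (∑ p ∈ S, if v ∈ U⁻¹ * {p.1} ∧ v ∈ {p.2} * W⁻¹ then 1 else 0)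
        = U.card * W.card := by
      intro v hv
      rw [hS, Finset.sum_product]
      have split : ∀ g h : G, (if v ∈ U⁻¹ * {g} ∧ v ∈ {h} * W⁻¹ then (1:ℕ) else 0)
          = (if v ∈ U⁻¹ * {g} then 1 else 0) * (if v ∈ {h} * W⁻¹ then 1 else 0) := by
        intro g h; split_ifs <;> simp_all
      simp_rw [split, ← Finset.mul_sum, ← Finset.sum_mul]
      have h1 : (∑ g ∈ U * V, if v ∈ U⁻¹ * {g} then (1:ℕ) else 0) = U.card := by
        rw [← Finset.card_filter]
        have : (U * V).filter (fun g => v ∈ U⁻¹ * {g}) = U * {v} := by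
          ext g
          simp only [Finset.mem_filter, memiff1]
          constructor
          · exact fun h => h.2
          · intro h
            exact ⟨Finset.mul_subset_mul_left (Finset.singleton_subset_iff.2 hv) h, h⟩
        rw [this, card_mul_singleton]
      have h2 : (∑ h ∈ V * W, if v ∈ {h} * W⁻¹ then (1:ℕ) else 0) = W.card := by
        rw [← Finset.card_filter]
        have : (V * W).filter (fun h => v ∈ {h} * W⁻¹) = {v} * W := by
          ext h
          simp only [Finset.mem_filter, memiff2]
          constructor
          · exact fun h => h.2
          · intro h
            exact ⟨Finset.mul_subset_mul_right (Finset.singleton_subset_iff.2 hv) h, h⟩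
        rw [this, card_singleton_mul]
      rw [h1, h2]
    rw [Finset.sum_congr rfl this]
    rw [Finset.sum_const, smul_eq_mul]
    ring
  have hSne : S.Nonempty := (hU.mul hV).product (hV.mul hW)
  have hD : (0:ℝ) < ((U * V).card : ℝ) * ((V * W).card : ℝ) := by
    have := (hU.mul hV).card_pos
    have := (hV.mul hW).card_pos
    positivity
  set c : ℝ := (U.card : ℝ) * V.card * W.card / (((U * V).card : ℝ) * ((V * W).card : ℝ))
    with hc
  have hsum : ∑ _p ∈ S, c ≤ ∑ p ∈ S, (((U⁻¹ * {p.1}) ∩ V ∩ ({p.2} * W⁻¹)).card : ℝ) := by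
    rw [Finset.sum_const, ← Nat.cast_sum, key]
    have hScard : (S.card : ℝ) = ((U * V).card : ℝ) * ((V * W).card : ℝ) := by
      rw [hS, Finset.card_product]; push_cast; ring
    rw [nsmul_eq_mul, hScard, hc, mul_div_cancel₀ _ (ne_of_gt hD)]
    push_cast; ring_nf; exact le_refl _
  obtain ⟨p, hp, hle⟩ := Finset.exists_le_of_sum_le hSne hsum
  exact ⟨p.1, p.2, hle⟩
end

section
/- Let G be a group, let Y, Z be finite subsets of G with Z nonempty, suppose |Z⁻¹·Z·Z⁻¹| ≤ |Y|/2, and let m be a positive real with |Y·Z⁻¹| ≤ m. Then there exists g ∈ G with g ∉ Z⁻¹·Z·Z⁻¹ such that |gZ ∩ Y| ≥ |Y|·|Z|/(2m). -/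
open Finset Pointwise

theorem stmt11 {G : Type*} [Group G] [DecidableEq G] (Y Z : Finset G) (hZ : Z.Nonempty)
    (hsmall : ((Z⁻¹ * Z * Z⁻¹).card : ℝ) ≤ (Y.card : ℝ) / 2)
    (m : ℝ) (hm : 0 < m) (hYZ : ((Y * Z⁻¹).card : ℝ) ≤ m) :
    ∃ g : G, g ∉ Z⁻¹ * Z * Z⁻¹ ∧
      (Y.card : ℝ) * Z.card / (2 * m) ≤ ((g • Z ∩ Y).card : ℝ) := by
  classical
  set T : Finset G := Z⁻¹ * Z * Z⁻¹ with hT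
  set S : Finset G := Y * Z⁻¹ with hS
  -- membership lemma
  have hmem : ∀ (a y : G) (W : Finset G), y ∈ a • W ↔ a⁻¹ * y ∈ W := by
    intro a y W
    constructor
    · intro h; obtain ⟨z, hz, rfl⟩ := Finset.mem_smul_finset.1 h; simpa using hz
    · intro h; have := Finset.smul_mem_smul_finset (a := a) h; simpa using this
  -- key counting identity
  have hsum : ∑ g ∈ S, (g • Z ∩ Y).card = Y.card * Z.card := by
    have h1 : ∀ g : G, (g • Z ∩ Y).card = ∑ y ∈ Y, if g⁻¹ * y ∈ Z then 1 else 0 := by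
      intro g
      rw [← Finset.sum_filter]
      simp only [Finset.sum_const, smul_eq_mul, mul_one]
      congr 1
      ext y
      simp [Finset.mem_filter, Finset.mem_inter, hmem g y Z, and_comm]
    calc ∑ g ∈ S, (g • Z ∩ Y).card
        = ∑ g ∈ S, ∑ y ∈ Y, if g⁻¹ * y ∈ Z then 1 else 0 := by
          exact Finset.sum_congr rfl fun g _ => h1 g
      _ = ∑ y ∈ Y, ∑ g ∈ S, if g⁻¹ * y ∈ Z then 1 else 0 := Finset.sum_comm
      _ = ∑ y ∈ Y, Z.card := by
          refine Finset.sum_congr rfl fun y hy => ?_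
          rw [← Finset.sum_filter]
          simp only [Finset.sum_const, smul_eq_mul, mul_one]
          have hfilt : S.filter (fun g => g⁻¹ * y ∈ Z) = y • Z⁻¹ := by
            ext g
            simp only [Finset.mem_filter, hmem y g Z⁻¹]
            constructor
            · rintro ⟨-, hg⟩
              have : y⁻¹ * g ∈ Z⁻¹ := by
                rw [Finset.mem_inv']
                simpa [mul_comm, mul_assoc] using hg
              exact this
            · intro hg
              have hgZ : g⁻¹ * y ∈ Z := by
                have := Finset.mem_inv'.1 hg
                simpa [mul_inv_rev] using this
              refine ⟨?_, hgZ⟩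
              have : y * (y⁻¹ * g) ∈ Y * Z⁻¹ := Finset.mul_mem_mul hy hg
              simpa [mul_assoc] using this
          rw [hfilt, Finset.card_smul_finset, Finset.card_inv]
      _ = Y.card * Z.card := by rw [Finset.sum_const, smul_eq_mul]
  -- bound the sum over S ∩ T
  have hcardle : ∀ g : G, (g • Z ∩ Y).card ≤ Z.card := fun g =>
    le_trans (Finset.card_le_card (Finset.inter_subset_left))
      (le_of_eq (Finset.card_smul_finset g Z))
  have hsplit : ∑ g ∈ S \ T, (g • Z ∩ Y).card + ∑ g ∈ S ∩ T, (g • Z ∩ Y).card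
      = Y.card * Z.card := by
    rw [← hsum]
    rw [← Finset.sdiff_inter_self_left S T]
    exact Finset.sum_sdiff (Finset.inter_subset_left)
  have hinter : ∑ g ∈ S ∩ T, (g • Z ∩ Y).card ≤ T.card * Z.card := by
    calc ∑ g ∈ S ∩ T, (g • Z ∩ Y).card ≤ ∑ _g ∈ S ∩ T, Z.card :=
          Finset.sum_le_sum fun g _ => hcardle g
      _ = (S ∩ T).card * Z.card := by rw [Finset.sum_const, smul_eq_mul]
      _ ≤ T.card * Z.card :=
          Nat.mul_le_mul_right _ (Finset.card_le_card Finset.inter_subset_right)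
  -- real-valued lower bound for sum over S \ T
  have hbig : ((Y.card : ℝ) * Z.card) / 2 ≤ ∑ g ∈ S \ T, ((g • Z ∩ Y).card : ℝ) := by
    have h1 : (∑ g ∈ S \ T, ((g • Z ∩ Y).card : ℝ))
        + ∑ g ∈ S ∩ T, ((g • Z ∩ Y).card : ℝ) = (Y.card : ℝ) * Z.card := by
      exact_mod_cast hsplit
    have h2 : (∑ g ∈ S ∩ T, ((g • Z ∩ Y).card : ℝ)) ≤ (T.card : ℝ) * Z.card := by
      exact_mod_cast hinter
    have h3 : (T.card : ℝ) * Z.card ≤ (Y.card : ℝ) / 2 * Z.card :=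
      mul_le_mul_of_nonneg_right hsmall (by positivity)
    nlinarith [h1, h2, h3]
  -- S \ T is nonempty
  have hTne : T.Nonempty := ((hZ.inv.mul hZ).mul hZ.inv)
  have hT1 : (1 : ℝ) ≤ T.card := by exact_mod_cast hTne.card_pos
  have hY2 : (2 : ℝ) ≤ Y.card := by linarith [hsmall, hT1]
  have hZ1 : (1 : ℝ) ≤ Z.card := by exact_mod_cast hZ.card_pos
  have hne : (S \ T).Nonempty := by
    rw [Finset.nonempty_iff_ne_empty]
    intro h
    rw [h, Finset.sum_empty] at hbig
    nlinarith
  -- pick maximizer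
  obtain ⟨g, hgmem, hgmax⟩ := Finset.exists_max_image (S \ T) (fun g => (g • Z ∩ Y).card) hne
  refine ⟨g, (Finset.mem_sdiff.1 hgmem).2, ?_⟩
  have hsum_le : (∑ g' ∈ S \ T, ((g' • Z ∩ Y).card : ℝ))
      ≤ (S \ T).card * ((g • Z ∩ Y).card : ℝ) := by
    calc (∑ g' ∈ S \ T, ((g' • Z ∩ Y).card : ℝ))
        ≤ ∑ _g' ∈ S \ T, ((g • Z ∩ Y).card : ℝ) := by
          exact Finset.sum_le_sum fun g' hg' => by exact_mod_cast hgmax g' hg'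
      _ = (S \ T).card * ((g • Z ∩ Y).card : ℝ) := by
          rw [Finset.sum_const, nsmul_eq_mul]
  have hScard : ((S \ T).card : ℝ) ≤ m := by
    refine le_trans ?_ hYZ
    exact_mod_cast Finset.card_le_card (Finset.sdiff_subset)
  have hbig' : ((Y.card : ℝ) * Z.card) / 2 ≤ m * ((g • Z ∩ Y).card : ℝ) := by
    have h0 : (0 : ℝ) ≤ ((g • Z ∩ Y).card : ℝ) := by positivity
    nlinarith [hbig, mul_le_mul_of_nonneg_right hScard h0]
  rw [div_le_iff₀ (by positivity)]
  nlinarith [hbig']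
end

section
/- Let X be a finite subset of a group G and let k ≥ 1 be a real number with |X·X| ≤ k·|X|. Then there is a subset Y ⊆ X such that |Y| ≥ |X|/k and |Y³| ≤ k³·|Y|. -/
open Finset Pointwise

/-- Noncommutative (left-sided) Petridis inequality. -/
theorem petridis_left' {G : Type*} [Group G] [DecidableEq G] {A B : Finset G} (C : Finset G)
    (hA : ∀ A' ⊆ A, (A * B).card * A'.card ≤ (A' * B).card * A.card) :
    (C * A * B).card * A.card ≤ (A * B).card * (C * A).card := by
  induction C using Finset.induction_on with
  | empty => simp
  | @insert x C hx ih =>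
    set A' := A ∩ ({x}⁻¹ * (C * A)) with hA'
    have h₀ : {x} * A' = ({x} * A) ∩ (C * A) := by
      rw [hA', singleton_mul_inter, ← mul_assoc, inv_singleton, singleton_mul_singleton,
        mul_inv_cancel, Finset.singleton_one, one_mul]
    have h₁ : insert x C * A * B = C * A * B ∪ ({x} * A * B) \ ({x} * A' * B) := by
      rw [insert_eq, union_comm, union_mul, union_mul]
      refine (sup_sdiff_eq_sup ?_).symm
      refine mul_subset_mul_right ?_
      rw [h₀]
      exact inter_subset_right
    have h₂ : {x} * A' * B ⊆ {x} * A * B :=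
      mul_subset_mul_right (mul_subset_mul_left inter_subset_left)
    have hc1 : ({x} * A' * B).card = (A' * B).card := by
      rw [mul_assoc, card_singleton_mul]
    have hc2 : ({x} * A * B).card = (A * B).card := by
      rw [mul_assoc, card_singleton_mul]
    have h₃ : (insert x C * A * B).card + (A' * B).card ≤
        (C * A * B).card + (A * B).card := by
      have hle : (A' * B).card ≤ (A * B).card := by
        rw [← hc1, ← hc2]; exact card_le_card h₂
      have := card_union_le (C * A * B) (({x} * A * B) \ ({x} * A' * B))
      rw [← h₁, card_sdiff_of_subset h₂, hc1, hc2] at this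
      omega
    -- key cardinality identity for `insert x C * A`
    have key : (insert x C * A).card + A'.card = (C * A).card + A.card := by
      have h4 : insert x C * A = C * A ∪ {x} * A := by
        rw [insert_eq, union_mul, union_comm]
      have h5 := card_union_add_card_inter (C * A) ({x} * A)
      have h6 : C * A ∩ ({x} * A) = {x} * A' := by rw [h₀, inter_comm]
      rw [h6, card_singleton_mul, card_singleton_mul] at h5
      rw [h4, h5]
    have hA'sub : A' ⊆ A := inter_subset_left
    have step : (insert x C * A * B).card * A.card + (A * B).card * A'.card ≤
        (A * B).card * (C * A).card + (A * B).card * A.card := by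
      calc (insert x C * A * B).card * A.card + (A * B).card * A'.card
          ≤ (insert x C * A * B).card * A.card + (A' * B).card * A.card :=
            Nat.add_le_add_left (hA A' hA'sub) _
        _ = ((insert x C * A * B).card + (A' * B).card) * A.card := by ring
        _ ≤ ((C * A * B).card + (A * B).card) * A.card :=
            Nat.mul_le_mul_right _ h₃
        _ = (C * A * B).card * A.card + (A * B).card * A.card := by ring
        _ ≤ (A * B).card * (C * A).card + (A * B).card * A.card :=
            Nat.add_le_add_right ih _
    have final : (A * B).card * (C * A).card + (A * B).card * A.card =
        (A * B).card * (insert x C * A).card + (A * B).card * A'.card := by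
      rw [← Nat.mul_add, ← Nat.mul_add, key]
    rw [final] at step
    exact Nat.le_of_add_le_add_right step

theorem stmt12 {G : Type*} [Group G] [DecidableEq G] (X : Finset G) (k : ℝ) (hk : 1 ≤ k)
    (hX : ((X * X).card : ℝ) ≤ k * X.card) :
    ∃ Y ⊆ X, (X.card : ℝ) / k ≤ Y.card ∧ ((Y ^ 3 : Finset G).card : ℝ) ≤ k ^ 3 * Y.card := by
  have hk0 : (0 : ℝ) < k := lt_of_lt_of_le one_pos hk
  rcases X.eq_empty_or_nonempty with rfl | hXne
  · refine ⟨∅, Finset.Subset.refl _, ?_, ?_⟩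
    · simp
    · simp [pow_succ]
  -- choose nonempty Y ⊆ X minimizing |Y*X| / |Y|
  obtain ⟨Y, hYmem, hmin⟩ := Finset.exists_min_image
    ((X.powerset).filter (fun S => S.Nonempty))
    (fun S => ((S * X).card : ℝ) / S.card)
    ⟨X, by simp [hXne]⟩
  simp only [mem_filter, mem_powerset] at hYmem
  obtain ⟨hYX, hYne⟩ := hYmem
  have hYcard : (0 : ℝ) < Y.card := by exact_mod_cast card_pos.mpr hYne
  have hXcard : (0 : ℝ) < X.card := by exact_mod_cast card_pos.mpr hXne
  -- the minimum ratio is at most k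
  have hck : ((Y * X).card : ℝ) / Y.card ≤ k := by
    have hXX := hmin X (by simp [hXne])
    refine hXX.trans ?_
    rw [div_le_iff₀ hXcard]
    exact hX
  have hYXle : ((Y * X).card : ℝ) ≤ k * Y.card := by
    rw [div_le_iff₀ hYcard] at hck
    exact hck
  -- Petridis hypothesis
  have hPet : ∀ A' ⊆ Y, (Y * X).card * A'.card ≤ (A' * X).card * Y.card := by
    intro A' hA'
    rcases A'.eq_empty_or_nonempty with rfl | hA'ne
    · simp
    have hA'card : (0 : ℝ) < A'.card := by exact_mod_cast card_pos.mpr hA'ne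
    have := hmin A' (by simp [hA'ne, hA'.trans hYX])
    rw [div_le_div_iff₀ hYcard hA'card] at this
    exact_mod_cast this
  have key := petridis_left' (A := Y) (B := X) Y hPet
  -- real versions
  have keyR : ((Y * Y * X).card : ℝ) * Y.card ≤ (Y * X).card * (Y * Y).card := by
    exact_mod_cast key
  have hYYle : ((Y * Y).card : ℝ) ≤ (Y * X).card := by
    exact_mod_cast card_le_card (mul_subset_mul_left hYX)
  have hY3 : (Y ^ 3 : Finset G) = Y * Y * Y := by
    rw [pow_succ, pow_succ, pow_one]
  have hY3sub : (Y ^ 3 : Finset G) ⊆ Y * Y * X := by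
    rw [hY3]
    exact mul_subset_mul_left hYX
  have hY3le : ((Y ^ 3 : Finset G).card : ℝ) ≤ (Y * Y * X).card := by
    exact_mod_cast card_le_card hY3sub
  have hXleYX : ((X.card : ℝ)) ≤ (Y * X).card := by
    exact_mod_cast card_le_card_mul_left hYne
  refine ⟨Y, hYX, ?_, ?_⟩
  · rw [div_le_iff₀ hk0]
    calc (X.card : ℝ) ≤ (Y * X).card := hXleYX
      _ ≤ k * Y.card := hYXle
      _ = Y.card * k := by ring
  · -- |Y^3| ≤ k^2 |Y| ≤ k^3 |Y|
    have h1 : ((Y ^ 3 : Finset G).card : ℝ) * Y.card ≤ (k * Y.card) * (k * Y.card) := by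
      calc ((Y ^ 3 : Finset G).card : ℝ) * Y.card
          ≤ ((Y * Y * X).card : ℝ) * Y.card := by
            apply mul_le_mul_of_nonneg_right hY3le hYcard.le
        _ ≤ (Y * X).card * (Y * Y).card := keyR
        _ ≤ (k * Y.card) * (Y * Y).card := by
            apply mul_le_mul_of_nonneg_right hYXle (Nat.cast_nonneg _)
        _ ≤ (k * Y.card) * (Y * X).card := by
            apply mul_le_mul_of_nonneg_left hYYle (by positivity)
        _ ≤ (k * Y.card) * (k * Y.card) := by
            apply mul_le_mul_of_nonneg_left hYXle (by positivity)
    have h2 : ((Y ^ 3 : Finset G).card : ℝ) ≤ k ^ 2 * Y.card := by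
      have := le_div_iff₀ hYcard |>.mpr h1
      calc ((Y ^ 3 : Finset G).card : ℝ) = ((Y ^ 3 : Finset G).card : ℝ) * Y.card / Y.card := by
            field_simp
        _ ≤ (k * Y.card) * (k * Y.card) / Y.card := by gcongr
        _ = k ^ 2 * Y.card := by field_simp
    calc ((Y ^ 3 : Finset G).card : ℝ) ≤ k ^ 2 * Y.card := h2
      _ ≤ k ^ 3 * Y.card := by
          apply mul_le_mul_of_nonneg_right _ hYcard.le
          calc k ^ 2 = 1 * k ^ 2 := by ring
            _ ≤ k * k ^ 2 := by apply mul_le_mul_of_nonneg_right hk (by positivity)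
            _ = k ^ 3 := by ring
end

section
/- Let n ≥ 2 be a natural number and let I ⊆ ℤ/nℤ be the image of the integer interval {⌊n/3⌋+1, …, ⌊2n/3⌋} under the canonical projection ℤ → ℤ/nℤ. Then I is sum-free, and for every nonzero subgroup K of ℤ/nℤ one has |K ∩ I| ≥ |K|/4. -/
theorem stmt13 (n : ℕ) (hn : 2 ≤ n) (I : Finset (ZMod n))
    (hI : I = (Finset.Icc ((n : ℤ) / 3 + 1) (2 * (n : ℤ) / 3)).image
      (fun i : ℤ => (i : ZMod n))) :
    (∀ x ∈ I, ∀ y ∈ I, x + y ∉ I) ∧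
    ∀ K : AddSubgroup (ZMod n), K ≠ ⊥ →
      ((K : Set (ZMod n)).ncard : ℝ) / 4 ≤ (((K : Set (ZMod n)) ∩ ↑I).ncard : ℝ) := by
  haveI : NeZero n := ⟨by omega⟩
  -- membership characterization of I
  have hmem : ∀ x : ZMod n, x ∈ I ↔ (n < 3 * x.val ∧ 3 * x.val ≤ 2 * n) := by
    intro x
    constructor
    · intro hx
      rw [hI, Finset.mem_image] at hx
      obtain ⟨i, hi, hix⟩ := hx
      rw [Finset.mem_Icc] at hi
      have h0 : 0 ≤ i := by omega
      have h1 : i < (n : ℤ) := by omega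
      set v : ℕ := i.toNat with hv
      have hiv : (v : ℤ) = i := Int.toNat_of_nonneg h0
      have hvn : v < n := by omega
      have hxv : x = ((v : ℕ) : ZMod n) := by
        rw [← hix, ← hiv]; push_cast; ring
      have : x.val = v := by rw [hxv]; exact ZMod.val_cast_of_lt hvn
      rw [this]
      omega
    · intro ⟨h1, h2⟩
      rw [hI, Finset.mem_image]
      refine ⟨(x.val : ℤ), ?_, ?_⟩
      · rw [Finset.mem_Icc]; omega
      · push_cast
        simp [ZMod.natCast_val, ZMod.cast_id]
  constructor
  · -- sum-free
    intro x hx y hy hxy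
    rw [hmem] at hx hy hxy
    have hadd : (x + y).val = (x.val + y.val) % n := ZMod.val_add x y
    set a := x.val; set b := y.val
    rcases lt_or_ge (a + b) n with h | h
    · rw [Nat.mod_eq_of_lt h] at hadd; omega
    · have h2 : a + b - n < n := by omega
      have : (a + b) % n = a + b - n := by
        rw [Nat.mod_eq_sub_mod h, Nat.mod_eq_of_lt h2]
      rw [this] at hadd; omega
  · -- subgroup part
    intro K hK
    classical
    set d := Nat.card K with hd
    have hdn : d ∣ n := by
      have := AddSubgroup.card_addSubgroup_dvd_card K
      rwa [Nat.card_zmod] at this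
    have hd0 : 0 < d := Nat.card_pos
    have hd1 : d ≠ 1 := fun h => hK (AddSubgroup.card_eq_one.mp h)
    have hd2 : 2 ≤ d := by omega
    set m := n / d with hm
    have hnm : n = d * m := (Nat.mul_div_cancel' hdn).symm
    have hm0 : 0 < m := Nat.div_pos (Nat.le_of_dvd (by omega) hdn) hd0
    -- every element of K has val divisible by m
    have hKdvd : ∀ x : ZMod n, x ∈ K → m ∣ x.val := by
      intro x hx
      have h1 : addOrderOf x ∣ d := AddSubgroup.addOrderOf_dvd_natCard K hx
      have h2 : d • x = 0 := addOrderOf_dvd_iff_nsmul_eq_zero.mp h1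
      have h2' : (d : ZMod n) * x = 0 := by rw [← nsmul_eq_mul]; exact h2
      have h3 : ((d * x.val : ℕ) : ZMod n) = 0 := by
        push_cast [ZMod.natCast_val, ZMod.cast_id]
        exact h2'
      have h4 : n ∣ d * x.val := (ZMod.natCast_eq_zero_iff _ _).mp h3
      have h5 : d * m ∣ d * x.val := by rw [← hnm]; exact h4
      exact (Nat.mul_dvd_mul_iff_left hd0).mp h5
    -- the finset of multiples of m
    set f : ℕ → ZMod n := fun k => ((k * m : ℕ) : ZMod n) with hf
    have hval : ∀ k < d, (f k).val = k * m := by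
      intro k hk
      have hlt : k * m < n := by
        have h := mul_lt_mul_of_pos_right hk hm0
        rw [hnm]; exact h
      exact ZMod.val_cast_of_lt hlt
    have hinj : ∀ k₁ < d, ∀ k₂ < d, f k₁ = f k₂ → k₁ = k₂ := by
      intro k₁ h₁ k₂ h₂ he
      have := hval k₁ h₁
      have := hval k₂ h₂
      have : k₁ * m = k₂ * m := by rw [← hval k₁ h₁, ← hval k₂ h₂, he]
      exact Nat.eq_of_mul_eq_mul_right hm0 this
    set S : Finset (ZMod n) := (Finset.range d).image f with hS
    have hScard : S.card = d := by
      rw [hS, Finset.card_image_of_injOn, Finset.card_range]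
      intro k₁ h₁ k₂ h₂ he
      exact hinj k₁ (Finset.mem_range.mp h₁) k₂ (Finset.mem_range.mp h₂) he
    have hKS : (K : Set (ZMod n)) = ↑S := by
      apply Set.eq_of_subset_of_ncard_le
      · intro x hx
        obtain ⟨k, hk⟩ := hKdvd x hx
        have hxv : x.val < n := ZMod.val_lt x
        rw [mul_comm] at hk
        have hkd : k < d := by
          by_contra h
          push_neg at h
          have h1 : d * m ≤ k * m := Nat.mul_le_mul_right m h
          omega
        have : x = f k := by
          have : ((x.val : ℕ) : ZMod n) = x := by
            simp [ZMod.natCast_val, ZMod.cast_id]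
          rw [← this, hk]
        rw [this]
        exact Finset.mem_coe.mpr (Finset.mem_image.mpr ⟨k, Finset.mem_range.mpr hkd, rfl⟩)
      · rw [Set.ncard_coe_finset, hScard, ← Nat.card_coe_set_eq]
        simp [hd, Nat.card_eq]
      · exact (S : Set (ZMod n)).toFinite
    -- intersection with I
    have hfI : ∀ k < d, (f k ∈ I ↔ (d < 3 * k ∧ 3 * k ≤ 2 * d)) := by
      intro k hk
      rw [hmem, hval k hk]
      constructor <;> intro ⟨h1, h2⟩ <;> constructor <;> nlinarith
    have hfin : S ∩ I = (Finset.Ioc (d / 3) (2 * d / 3)).image f := by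
      ext x
      simp only [Finset.mem_inter, hS, Finset.mem_image, Finset.mem_range, Finset.mem_Ioc]
      constructor
      · rintro ⟨⟨k, hk, rfl⟩, hxI⟩
        refine ⟨k, ?_, rfl⟩
        have := (hfI k hk).mp hxI
        omega
      · rintro ⟨k, hk, rfl⟩
        have hkd : k < d := by omega
        exact ⟨⟨k, hkd, rfl⟩, (hfI k hkd).mpr (by omega)⟩
    have hinter : (K : Set (ZMod n)) ∩ ↑I = ↑((Finset.Ioc (d / 3) (2 * d / 3)).image f) := by
      rw [hKS, ← Finset.coe_inter, hfin]
    rw [hinter, Set.ncard_coe_finset]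
    have hcard : ((Finset.Ioc (d / 3) (2 * d / 3)).image f).card = 2 * d / 3 - d / 3 := by
      rw [Finset.card_image_of_injOn, Nat.card_Ioc]
      intro k₁ h₁ k₂ h₂ he
      rw [Finset.mem_coe, Finset.mem_Ioc] at h₁ h₂
      exact hinj k₁ (by omega) k₂ (by omega) he
    rw [hcard]
    have hK' : ((K : Set (ZMod n)).ncard) = d := by
      rw [← Nat.card_coe_set_eq]
      simp [hd, Nat.card_eq]
    rw [hK']
    have key' : ∀ e : ℕ, 2 ≤ e → e ≤ 4 * (2 * e / 3 - e / 3) := by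
      intro e he
      obtain ⟨q, r, hr3, hdq⟩ : ∃ q r, r < 3 ∧ e = 3 * q + r :=
        ⟨e / 3, e % 3, Nat.mod_lt _ (by norm_num), by omega⟩
      subst hdq
      interval_cases r <;> omega
    have key : d ≤ 4 * (2 * d / 3 - d / 3) := key' d hd2
    rw [div_le_iff₀ (by norm_num)]
    calc (d : ℝ) ≤ (4 * (2 * d / 3 - d / 3) : ℕ) := by exact_mod_cast key
      _ = ((2 * d / 3 - d / 3 : ℕ) : ℝ) * 4 := by push_cast; ring
end

section
/- Let (G,+,0) be an abelian group, let B ⊆ G \ {0} be a finite subset, and for each b ∈ B let w_b be a positive integer. Then there is a sum-free subset A ⊆ B with ∑_{a∈A} w_a ≥ (1/4)·∑_{b∈B} w_b. -/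
/-!
Every nonzero `b ∈ B` is detected by some character `χ_b : G → ℚ/ℤ`. The characters
`∑ n_b χ_b`, restricted to `B`, form a finitely generated torsion, hence finite, group `Ω`, and
for each `b ∈ B` evaluation at `b` is a nonzero homomorphism `Ω → ℚ/ℤ`. Its image is the cyclic
group `(1/n)ℤ/ℤ` with `n ≥ 2`, over which it is equidistributed, so at least a quarter of `Ω`
sends `b` into the sum-free set `(1/3, 2/3] + ℤ`. Averaging over `Ω` produces a character `ψ`
for which the weight of `{b ∈ B | ψ b ∈ (1/3, 2/3] + ℤ}` is at least a quarter of the total,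
and this set is sum-free because `ψ` is additive.
-/

open Finset

namespace SumFree

theorem card_filter_apply_eq_mul {Ω M : Type*} [AddGroup Ω] [Fintype Ω] [AddMonoid M]
    [DecidableEq M] (f : Ω →+ M) (p : M → Prop) [DecidablePred p] :
    #{t | p (f t)} = #{z ∈ univ.image f | p z} * #{t | f t = 0} := by
  rw [card_eq_sum_card_fiberwise (f := f) (t := {z ∈ univ.image f | p z})
    (fun t ht => by simpa using (mem_filter.1 ht).2), ← smul_eq_mul, ← sum_const]
  refine sum_congr rfl fun z hz => ?_
  obtain ⟨hz, hpz⟩ := mem_filter.1 hz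
  rw [filter_filter]
  have hfiber : ∀ t, p (f t) ∧ f t = z ↔ f t = z := fun t => ⟨And.right, fun h => ⟨h ▸ hpz, h⟩⟩
  simp only [hfiber]
  exact AddMonoidHom.card_fiber_eq_of_mem_range f (by simpa using hz) ⟨0, map_zero f⟩

theorem card_image_nsmul_eq_zero {Ω M : Type*} [AddGroup Ω] [Fintype Ω] [AddGroup M]
    [DecidableEq M] (φ : Ω →+ M) :
    ∀ z ∈ univ.image φ, #(univ.image φ) • z = 0 := by
  intro z hz
  obtain ⟨t, -, rfl⟩ := mem_image.1 hz
  have h := φ.range.addOrderOf_dvd_natCard (AddMonoidHom.mem_range.2 ⟨t, rfl⟩)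
  rw [← Set.toFinset_range, ← Nat.card_eq_card_toFinset, ← AddMonoidHom.coe_range]
  exact addOrderOf_dvd_iff_nsmul_eq_zero.1 h

theorem exists_mul_sum_le_sum_filter {Ω ι R : Type*} [Fintype Ω] [Nonempty Ω] [CommRing R]
    [LinearOrder R] [IsStrictOrderedRing R] (s : Finset ι) (w : ι → R) (hw : ∀ i ∈ s, 0 ≤ w i)
    (P : Ω → ι → Prop) [∀ t i, Decidable (P t i)] (c : R)
    (h : ∀ i ∈ s, c * Fintype.card Ω ≤ #{t | P t i}) :
    ∃ t, c * ∑ i ∈ s, w i ≤ ∑ i ∈ s with P t i, w i := by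
  have hcount : ∑ t, ∑ i ∈ s with P t i, w i = ∑ i ∈ s, (#{t | P t i} : R) * w i := by
    simp_rw [sum_filter]
    rw [sum_comm]
    refine sum_congr rfl fun i _ => ?_
    rw [← sum_filter, sum_const, nsmul_eq_mul]
  have hle : ∑ _t : Ω, c * ∑ i ∈ s, w i ≤ ∑ t, ∑ i ∈ s with P t i, w i := by
    rw [hcount, sum_const, card_univ, nsmul_eq_mul, mul_sum, mul_sum]
    refine sum_le_sum fun i hi => ?_
    rw [← mul_assoc, mul_comm (Fintype.card Ω : R) c]
    exact mul_le_mul_of_nonneg_right (h i hi) (hw i hi)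
  obtain ⟨t, -, ht⟩ := exists_le_of_sum_le univ_nonempty hle
  exact ⟨t, ht⟩

theorem isAddTorsion_addCircle_rat : IsAddTorsion (AddCircle (1 : ℚ)) := fun u =>
  QuotientAddGroup.induction_on u fun a =>
    AddCircle.isOfFinAddOrder_iff_exists_rat_eq_div.2 ⟨a, by simp⟩

theorem injOn_natCast_div (n : ℕ) :
    Set.InjOn (fun k : ℕ => ((k / n : ℚ) : AddCircle (1 : ℚ))) (range n) := by
  intro k hk k' hk' h
  have hn : (0 : ℚ) < n := by exact_mod_cast (Nat.zero_le k).trans_lt (mem_range.1 hk)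
  have mem_Ico {j : ℕ} (hj : j ∈ (range n : Set ℕ)) : (j / n : ℚ) ∈ Set.Ico (0 : ℚ) (0 + 1) :=
    ⟨by positivity, by rw [zero_add, div_lt_one hn]; exact_mod_cast mem_range.1 hj⟩
  have hdiv := (AddCircle.coe_eq_coe_iff_of_mem_Ico (mem_Ico hk) (mem_Ico hk')).1 h
  rw [div_left_inj' hn.ne'] at hdiv
  exact_mod_cast hdiv

theorem eq_image_range_of_forall_card_nsmul_eq_zero {R : Finset (AddCircle (1 : ℚ))}
    (hR : ∀ z ∈ R, #R • z = 0) :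
    R = (range #R).image (fun k : ℕ => ((k / #R : ℚ) : AddCircle (1 : ℚ))) := by
  rcases R.eq_empty_or_nonempty with rfl | hne
  · simp
  have hsub : R ⊆ (range #R).image (fun k : ℕ => ((k / #R : ℚ) : AddCircle (1 : ℚ))) := by
    intro z hz
    obtain ⟨m, hm, rfl⟩ := (AddCircle.nsmul_eq_zero_iff hne.card_pos).1 (hR z hz)
    exact mem_image.2 ⟨m, mem_range.2 hm, by rw [mul_one]⟩
  refine eq_of_subset_of_card_le hsub ?_
  rw [card_image_of_injOn (injOn_natCast_div _), card_range]

def middleThird : Set (AddCircle (1 : ℚ)) := (↑) '' Set.Ioc (1 / 3 : ℚ) (2 / 3)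

theorem add_notMem_middleThird {x y : AddCircle (1 : ℚ)} (hx : x ∈ middleThird)
    (hy : y ∈ middleThird) : x + y ∉ middleThird := by
  obtain ⟨a, ⟨ha₁, ha₂⟩, rfl⟩ := hx
  obtain ⟨b, ⟨hb₁, hb₂⟩, rfl⟩ := hy
  rintro ⟨c, ⟨hc₁, hc₂⟩, hc⟩
  have hk : ((a + b - c : ℚ) : AddCircle (1 : ℚ)) = 0 := by
    rw [AddCircle.coe_sub, AddCircle.coe_add, hc, sub_self]
  obtain ⟨k, hk⟩ := (AddCircle.coe_eq_zero_iff 1).1 hk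
  rw [zsmul_one] at hk
  have h₀ : (0 : ℚ) < k := by linarith
  have h₁ : (k : ℚ) < 1 := by linarith
  norm_cast at h₀ h₁
  omega

theorem natCast_div_mem_middleThird_iff {n k : ℕ} (hk : k < n) :
    ((k / n : ℚ) : AddCircle (1 : ℚ)) ∈ middleThird ↔ n < 3 * k ∧ 3 * k ≤ 2 * n := by
  have hn : (0 : ℚ) < n := by exact_mod_cast (Nat.zero_le k).trans_lt hk
  have hkn : (k / n : ℚ) ∈ Set.Ico (0 : ℚ) (0 + 1) :=
    ⟨by positivity, by rw [zero_add, div_lt_one hn]; exact_mod_cast hk⟩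
  have hcoe : ((k / n : ℚ) : AddCircle (1 : ℚ)) ∈ middleThird ↔
      (k / n : ℚ) ∈ Set.Ioc (1 / 3 : ℚ) (2 / 3) := by
    refine ⟨fun ⟨c, hc, hck⟩ => ?_, fun h => ⟨_, h, rfl⟩⟩
    have hc' : c ∈ Set.Ico (0 : ℚ) (0 + 1) := ⟨by linarith [hc.1], by linarith [hc.2]⟩
    rwa [← (AddCircle.coe_eq_coe_iff_of_mem_Ico hc' hkn).1 hck]
  rw [hcoe, Set.mem_Ioc, div_lt_div_iff₀ (by norm_num) hn, div_le_div_iff₀ hn (by norm_num)]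
  norm_cast
  omega

theorem card_le_four_mul_card_filter_range {n : ℕ} (hn : 2 ≤ n) :
    n ≤ 4 * #{k ∈ range n | n < 3 * k ∧ 3 * k ≤ 2 * n} := by
  have : {k ∈ range n | n < 3 * k ∧ 3 * k ≤ 2 * n} = Ico (n / 3 + 1) (2 * n / 3 + 1) := by
    ext k
    simp only [mem_filter, mem_range, mem_Ico]
    omega
  rw [this, Nat.card_Ico]
  obtain ⟨m, rfl | rfl | rfl⟩ : ∃ m, n = 3 * m ∨ n = 3 * m + 1 ∨ n = 3 * m + 2 :=
    ⟨n / 3, by omega⟩ <;> omega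

open scoped Classical in
theorem card_le_four_mul_card_preimage_middleThird {Ω : Type*} [AddCommGroup Ω] [Fintype Ω]
    (φ : Ω →+ AddCircle (1 : ℚ)) (hφ : φ ≠ 0) :
    Fintype.card Ω ≤ 4 * #{t | φ t ∈ middleThird} := by
  set R := univ.image φ
  set n := #R
  have hR : R = (range n).image (fun k : ℕ => ((k / n : ℚ) : AddCircle (1 : ℚ))) :=
    eq_image_range_of_forall_card_nsmul_eq_zero (card_image_nsmul_eq_zero φ)
  have hn : 2 ≤ n := by
    obtain ⟨t, ht⟩ := DFunLike.ne_iff.1 hφ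
    exact one_lt_card.2 ⟨φ t, mem_image_of_mem φ (mem_univ t), 0,
      mem_image.2 ⟨0, mem_univ 0, map_zero φ⟩, ht⟩
  have hmiddle : #{z ∈ R | z ∈ middleThird} = #{k ∈ range n | n < 3 * k ∧ 3 * k ≤ 2 * n} := by
    rw [hR, filter_image,
      card_image_of_injOn ((injOn_natCast_div n).mono (coe_subset.2 (filter_subset _ _)))]
    exact congrArg card (filter_congr fun k hk => natCast_div_mem_middleThird_iff (mem_range.1 hk))
  calc Fintype.card Ω = n * #{t | φ t = 0} := by
        simpa using card_filter_apply_eq_mul φ (fun _ => True)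
    _ ≤ 4 * #{k ∈ range n | n < 3 * k ∧ 3 * k ≤ 2 * n} * #{t | φ t = 0} :=
        Nat.mul_le_mul_right _ (card_le_four_mul_card_filter_range hn)
    _ = 4 * #{t | φ t ∈ middleThird} := by
        rw [card_filter_apply_eq_mul φ (· ∈ middleThird), hmiddle, mul_assoc]

open scoped Classical in
theorem exists_character_mul_sum_le_sum_filter_middleThird {G R : Type*} [AddCommGroup G]
    [Field R] [LinearOrder R] [IsStrictOrderedRing R] (B : Finset G) (hB : (0 : G) ∉ B)
    (w : G → R) (hw : ∀ b ∈ B, 0 ≤ w b) :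
    ∃ ψ : CharacterModule G, 1 / 4 * ∑ b ∈ B, w b ≤ ∑ b ∈ B with ψ b ∈ middleThird, w b := by
  choose χ hχ using fun b : B =>
    CharacterModule.exists_character_apply_ne_zero_of_ne_zero (ne_of_mem_of_not_mem b.2 hB)
  let restrict : CharacterModule G →+ (B → AddCircle (1 : ℚ)) :=
    { toFun := fun ψ b => ψ b, map_zero' := rfl, map_add' := fun _ _ => rfl }
  let Ω := AddSubgroup.closure (Set.range (restrict ∘ χ))
  have : Finite Ω := AddCommGroup.finite_of_fg_isAddTorsion Ω <|
    IsAddTorsion.addSubgroup (fun _ => .pi fun _ => isAddTorsion_addCircle_rat _) Ω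
  have : Fintype Ω := Fintype.ofFinite Ω
  have hΩ : ∀ b : B, (1 / 4 : R) * Fintype.card Ω ≤ #{ω : Ω | (ω : B → _) b ∈ middleThird} := by
    intro b
    have hev : (Pi.evalAddMonoidHom _ b).comp Ω.subtype ≠ 0 := fun h =>
      hχ b (DFunLike.congr_fun h ⟨_, AddSubgroup.subset_closure ⟨b, rfl⟩⟩)
    have hcard : (Fintype.card Ω : R) ≤ 4 * #{ω : Ω | (ω : B → _) b ∈ middleThird} := by
      exact_mod_cast card_le_four_mul_card_preimage_middleThird _ hev
    linarith
  obtain ⟨⟨ω, hω⟩, hsum⟩ := exists_mul_sum_le_sum_filter univ (fun b : B => w b)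
    (fun b _ => hw b b.2) _ _ fun b _ => hΩ b
  obtain ⟨ψ, rfl⟩ : ω ∈ restrict.range :=
    (AddSubgroup.closure_le _).2
      (Set.range_subset_iff.2 fun b => AddMonoidHom.mem_range.2 ⟨χ b, rfl⟩) hω
  refine ⟨ψ, ?_⟩
  rw [← sum_coe_sort B, sum_filter, ← sum_coe_sort B, ← sum_filter]
  exact hsum

end SumFree

theorem stmt14_general {G : Type*} [AddCommGroup G] (B : Finset G) (hB : (0 : G) ∉ B)
    (w : G → ℕ) :
    ∃ A ⊆ B, (∀ x ∈ A, ∀ y ∈ A, x + y ∉ A) ∧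
      (1 / 4 : ℝ) * ∑ b ∈ B, (w b : ℝ) ≤ ∑ a ∈ A, (w a : ℝ) := by
  classical
  obtain ⟨ψ, hψ⟩ := SumFree.exists_character_mul_sum_le_sum_filter_middleThird B hB
    (fun b => (w b : ℝ)) fun b _ => Nat.cast_nonneg _
  refine ⟨{b ∈ B | ψ b ∈ SumFree.middleThird}, filter_subset _ _, ?_, hψ⟩
  intro x hx y hy hxy
  rw [mem_filter] at hx hy hxy
  exact SumFree.add_notMem_middleThird hx.2 hy.2 (map_add ψ x y ▸ hxy.2)

theorem stmt14 {G : Type*} [AddCommGroup G] (B : Finset G) (hB : (0 : G) ∉ B)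
    (w : G → ℕ) (hw : ∀ b ∈ B, 0 < w b) :
    ∃ A ⊆ B, (∀ x ∈ A, ∀ y ∈ A, x + y ∉ A) ∧
      (1 / 4 : ℝ) * ∑ b ∈ B, (w b : ℝ) ≤ ∑ a ∈ A, (w a : ℝ) :=
  stmt14_general B hB w
end

section
/- Let (G,·,1) be a solvable group whose derived series reaches the trivial subgroup after n+1 steps (equivalently, G admits a subnormal series of length n+1 with abelian factor groups). Then every finite subset C ⊆ G \ {1} contains a product-free subset of size at least (1/4)·|C|/2ⁿ. -/
/-!
Erdős's middle-third argument, run through the derived series. Suppose every element of a finite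
set `S` is detected by a homomorphism `v` from `G` to some `(ℤ/N)^ι`. For `c ∈ (ℤ/N)^ι`, the
elements `x ∈ S` with `c ⬝ v(x)` in the middle third of `ℤ/N` form a product-free set, and since
`c ↦ c ⬝ v(x)` is uniformly distributed on a nontrivial subgroup of `ℤ/N`, each `x` lands there
for at least a quarter of all `c`; so some `c` selects a quarter of `S`. Elements outside the
commutator subgroup `G'` are detected in this way through the abelianization. In general, at least
half of `C` lies either outside `G'`, or inside `G'`, whose derived length is one less; each step
down the derived series costs a factor `2`.
-/

open Finset

def IsProductFree {M : Type*} [Mul M] (A : Set M) : Prop :=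
  ∀ x ∈ A, ∀ y ∈ A, x * y ∉ A

theorem Finset.exists_card_le_mul_card_filter {α β : Type*} [Fintype β] [Nonempty β]
    (S : Finset α) (r : β → α → Prop) [∀ b a, Decidable (r b a)] (k : ℕ)
    (h : ∀ a ∈ S, Fintype.card β ≤ k * #{b | r b a}) : ∃ b, #S ≤ k * #{a ∈ S | r b a} := by
  have : ∑ _b : β, #S ≤ ∑ b : β, k * #{a ∈ S | r b a} :=
    calc ∑ _b : β, #S = ∑ _a ∈ S, Fintype.card β := by simp [mul_comm]
      _ ≤ ∑ a ∈ S, k * #{b | r b a} := sum_le_sum h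
      _ = ∑ b : β, k * #{a ∈ S | r b a} := by
        rw [← mul_sum, ← mul_sum]
        congr 1
        exact sum_card_bipartiteAbove_eq_sum_card_bipartiteBelow (fun a b => r b a)
  obtain ⟨b, -, hb⟩ := exists_le_of_sum_le univ_nonempty this
  exact ⟨b, hb⟩

theorem Nat.le_four_mul_card_middleThird_range {d : ℕ} (hd : 2 ≤ d) :
    d ≤ 4 * #{k ∈ range d | d ≤ 3 * k ∧ 3 * k < 2 * d} := by
  have : {k ∈ range d | d ≤ 3 * k ∧ 3 * k < 2 * d} = Ico ((d + 2) / 3) ((2 * d + 2) / 3) := by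
    ext k
    simp only [mem_filter, mem_range, mem_Ico]
    omega
  rw [this, Nat.card_Ico]
  obtain ⟨q, r, hr, rfl⟩ : ∃ q r, r < 3 ∧ d = 3 * q + r := ⟨d / 3, d % 3, by omega, by omega⟩
  interval_cases r <;> omega

theorem AddMonoidHom.card_preimage_eq_card_mul_card_ker {V W : Type*} [AddGroup V] [Fintype V]
    [AddMonoid W] [DecidableEq W] (f : V →+ W) {s : Finset W} (hs : ∀ w ∈ s, w ∈ Set.range f) :
    #{v | f v ∈ s} = #s * #{v | f v = 0} := by
  rw [card_eq_sum_card_fiberwise (f := f) (t := s) (fun v hv => by simpa using hv), ← smul_eq_mul,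
    ← sum_const]
  refine sum_congr rfl fun w hw => ?_
  rw [filter_filter]
  convert AddMonoidHom.card_fiber_eq_of_mem_range f (hs w hw) ⟨0, map_zero f⟩ using 3
  grind

namespace ZMod

def middleThird (N : ℕ) [NeZero N] : Finset (ZMod N) :=
  {z | N ≤ 3 * z.val ∧ 3 * z.val < 2 * N}

variable {N : ℕ} [NeZero N]

theorem mem_middleThird {z : ZMod N} : z ∈ middleThird N ↔ N ≤ 3 * z.val ∧ 3 * z.val < 2 * N := by
  simp [middleThird]

theorem add_notMem_middleThird {a b : ZMod N} (ha : a ∈ middleThird N) (hb : b ∈ middleThird N) :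
    a + b ∉ middleThird N := by
  rw [mem_middleThird] at *
  rcases lt_or_ge (a.val + b.val) N with h | h
  · rw [val_add_of_lt h]; omega
  · rw [val_add_of_le h]; omega

theorem exists_dvd_val_iff_mem (D : AddSubgroup (ZMod N)) :
    ∃ m, m ∣ N ∧ ∀ z : ZMod N, z ∈ D ↔ m ∣ z.val := by
  obtain ⟨a, ha⟩ := Int.subgroup_cyclic (D.comap (Int.castAddHom (ZMod N)))
  have mem_D_iff (k : ℤ) : (k : ZMod N) ∈ D ↔ a.natAbs ∣ k.natAbs := by
    rw [Int.natAbs_dvd_natAbs, ← Int.mem_zmultiples_iff, AddSubgroup.zmultiples_eq_closure, ← ha]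
    rfl
  refine ⟨a.natAbs, by simpa using (mem_D_iff N).mp (by simp), fun z => ?_⟩
  have := mem_D_iff z.val
  rwa [Int.cast_natCast, natCast_zmod_val, Int.natAbs_natCast] at this

theorem card_filter_dvd_val {m : ℕ} (hm : m ∣ N) (p : ℕ → Prop) [DecidablePred p] :
    #{z : ZMod N | m ∣ z.val ∧ p z.val} = #{k ∈ range (N / m) | p (m * k)} := by
  have hm0 : 0 < m := Nat.pos_of_dvd_of_pos hm (NeZero.pos N)
  have hmul_lt {k : ℕ} (hk : k < N / m) : m * k < N :=
    (Nat.mul_lt_mul_left hm0).mpr hk |>.trans_eq (Nat.mul_div_cancel' hm)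
  refine card_nbij' (fun z => z.val / m) (fun k => (m * k : ℕ)) ?_ ?_ ?_ ?_ <;>
    intro x hx <;> simp only [coe_filter, mem_univ, true_and, Set.mem_ofPred_eq,
      mem_range] at hx ⊢
  · rw [Nat.mul_div_cancel' hx.1]
    exact ⟨Nat.div_lt_div_of_lt_of_dvd hm x.val_lt, hx.2⟩
  · rw [val_cast_of_lt (hmul_lt hx.1)]
    exact ⟨dvd_mul_right m x, hx.2⟩
  · rw [Nat.mul_div_cancel' hx.1, natCast_zmod_val]
  · rw [val_cast_of_lt (hmul_lt hx.1), Nat.mul_div_cancel_left x hm0]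

theorem card_dvd_val_le_four_mul_card_middleThird {m : ℕ} (hm : m ∣ N) (hmN : m < N) :
    #{z : ZMod N | m ∣ z.val} ≤ 4 * #{z : ZMod N | m ∣ z.val ∧ z ∈ middleThird N} := by
  obtain ⟨d, rfl⟩ := hm
  have hm0 : 0 < m := Nat.pos_of_ne_zero (by rintro rfl; simp at hmN)
  have hd : 2 ≤ d := by
    by_contra!
    interval_cases d <;> simp at hmN
  have hcard := card_filter_dvd_val (dvd_mul_right m d) (fun _ => True)
  have hmiddle := card_filter_dvd_val (dvd_mul_right m d)
    (fun j => m * d ≤ 3 * j ∧ 3 * j < 2 * (m * d))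
  simp only [and_true, filter_true, card_range, Nat.mul_div_cancel_left d hm0] at hcard hmiddle
  simp only [mem_middleThird]
  rw [hcard, hmiddle]
  convert Nat.le_four_mul_card_middleThird_range hd using 3
  refine filter_congr fun k _ => ?_
  rw [mul_left_comm 3 m k, mul_left_comm 2 m d, Nat.mul_le_mul_left_iff hm0,
    Nat.mul_lt_mul_left hm0]

theorem card_le_four_mul_card_preimage_middleThird {V : Type*} [AddGroup V] [Fintype V]
    (f : V →+ ZMod N) (hf : f ≠ 0) : Fintype.card V ≤ 4 * #{v | f v ∈ middleThird N} := by
  obtain ⟨m, hm, hmem⟩ := exists_dvd_val_iff_mem f.range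
  obtain ⟨v₀, hv₀⟩ := DFunLike.ne_iff.mp hf
  have hmN : m < N := by
    have hdvd := (hmem (f v₀)).mp ⟨v₀, rfl⟩
    have hval := (val_ne_zero (f v₀)).mpr hv₀
    exact (Nat.le_of_dvd (Nat.pos_of_ne_zero hval) hdvd).trans_lt (f v₀).val_lt
  have hrange {s : Finset (ZMod N)} (hs : ∀ z ∈ s, m ∣ z.val) : ∀ z ∈ s, z ∈ Set.range f :=
    fun z hz => (hmem z).mpr (hs z hz)
  calc Fintype.card V = #{v | f v ∈ ({z | m ∣ z.val} : Finset (ZMod N))} := by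
        rw [filter_true_of_mem fun v _ => by simpa using (hmem (f v)).mp ⟨v, rfl⟩, card_univ]
    _ = #{z : ZMod N | m ∣ z.val} * #{v | f v = 0} :=
        f.card_preimage_eq_card_mul_card_ker (hrange (by simp))
    _ ≤ 4 * #{z : ZMod N | m ∣ z.val ∧ z ∈ middleThird N} * #{v | f v = 0} :=
        Nat.mul_le_mul_right _ (card_dvd_val_le_four_mul_card_middleThird hm hmN)
    _ = 4 * #{v | f v ∈ ({z | m ∣ z.val ∧ z ∈ middleThird N} : Finset (ZMod N))} := by
        rw [f.card_preimage_eq_card_mul_card_ker (hrange (by simp +contextual)), mul_assoc]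
    _ ≤ 4 * #{v | f v ∈ middleThird N} := by
        gcongr
        exact fun z hz => (mem_filter.mp hz).2.2

theorem exists_injective_addMonoidHom_of_dvd {a N : ℕ} (h : a ∣ N) (hN : N ≠ 0) :
    ∃ f : ZMod a →+ ZMod N, Function.Injective f := by
  obtain ⟨b, rfl⟩ := h
  have hb : (b : ℤ) ≠ 0 := by exact_mod_cast right_ne_zero_of_mul hN
  let f : ℤ →+ ZMod (a * b) := (Int.castAddHom _).comp (AddMonoidHom.mulRight (b : ℤ))
  have hf : f a = 0 := by
    simp only [f, AddMonoidHom.comp_apply, AddMonoidHom.mulRight_apply, Int.coe_castAddHom]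
    exact_mod_cast natCast_self (a * b)
  refine ⟨lift a ⟨f, hf⟩, (lift_injective a).mpr fun m hm => ?_⟩
  simp only [f, AddMonoidHom.comp_apply, AddMonoidHom.mulRight_apply, Int.coe_castAddHom,
    intCast_zmod_eq_zero_iff_dvd, Nat.cast_mul] at hm
  exact (intCast_zmod_eq_zero_iff_dvd m a).mpr (Int.dvd_of_mul_dvd_mul_right hb hm)

end ZMod

open Multiplicative in
theorem exists_isProductFree_subset_of_mulHom_zmod {G ι : Type*} [Mul G] [Fintype ι] {N : ℕ}
    [NeZero N] (v : G →ₙ* Multiplicative (ι → ZMod N)) (S : Finset G) (hS : ∀ x ∈ S, v x ≠ 1) :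
    ∃ A ⊆ S, IsProductFree (A : Set G) ∧ #S ≤ 4 * #A := by
  classical
  let χ (c : ι → ZMod N) (x : G) : ZMod N := c ⬝ᵥ toAdd (v x)
  have hχ_mul (c : ι → ZMod N) (x y : G) : χ c (x * y) = χ c x + χ c y := by
    simp only [χ, map_mul, toAdd_mul, dotProduct_add]
  obtain ⟨c, hc⟩ := S.exists_card_le_mul_card_filter (fun c x => χ c x ∈ ZMod.middleThird N) 4
    fun x hx => by
      obtain ⟨i, hi⟩ := Function.ne_iff.mp (toAdd_eq_zero.not.mpr (hS x hx))
      refine ZMod.card_le_four_mul_card_preimage_middleThird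
        (AddMonoidHom.mk' (· ⬝ᵥ toAdd (v x)) fun a b => add_dotProduct a b _) ?_
      exact DFunLike.ne_iff.mpr ⟨Pi.single i 1, by simpa [single_one_dotProduct] using hi⟩
  refine ⟨{x ∈ S | χ c x ∈ ZMod.middleThird N}, filter_subset _ _, ?_, hc⟩
  intro x hx y hy hxy
  simp only [coe_filter, Set.mem_ofPred_eq] at hx hy hxy
  exact ZMod.add_notMem_middleThird hx.2 hy.2 (hχ_mul c x y ▸ hxy.2)

theorem Subgroup.exists_isProductFree_subset_of_subtype {G : Type*} [Group G] (K : Subgroup G)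
    [DecidablePred (· ∈ K)] {S : Finset G} (hS : ∀ x ∈ S, x ∈ K) {k : ℕ}
    (h : ∃ A ⊆ S.subtype (· ∈ K), IsProductFree (A : Set K) ∧ #(S.subtype (· ∈ K)) ≤ k * #A) :
    ∃ A ⊆ S, IsProductFree (A : Set G) ∧ #S ≤ k * #A := by
  obtain ⟨A, hAS, hA, hcard⟩ := h
  refine ⟨A.map (.subtype _), ?_, ?_, ?_⟩
  · calc A.map (.subtype _) ⊆ (S.subtype (· ∈ K)).map (.subtype _) := map_subset_map.mpr hAS
      _ = S := by rw [subtype_map, filter_true_of_mem hS]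
  · rw [Finset.coe_map]
    rintro - ⟨x, hx, rfl⟩ - ⟨y, hy, rfl⟩ ⟨z, hz, hzxy⟩
    have : z = x * y := Subtype.ext hzxy
    exact hA x hx y hy (this ▸ hz)
  · rwa [card_map, ← filter_true_of_mem hS, ← Finset.card_subtype]

theorem AddCommGroup.exists_addMonoidHom_zmod_ne_zero {A : Type*} [AddCommGroup A] [AddGroup.FG A]
    {x : A} (hx : x ≠ 0) : ∃ N ≠ 0, ∃ φ : A →+ ZMod N, φ x ≠ 0 := by
  obtain ⟨n, ι, _, p, hp, e, ⟨f⟩⟩ := AddCommGroup.equiv_free_prod_directSum_zmod A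
  have hfx : (f x).1 ≠ 0 ∨ (f x).2 ≠ 0 := by
    contrapose! hx
    exact f.injective (Prod.ext hx.1 hx.2 |>.trans (map_zero f).symm)
  rcases hfx with hfree | htors
  · obtain ⟨i, hi⟩ := Finsupp.ne_iff.mp hfree
    refine ⟨((f x).1 i).natAbs + 1, by omega, (Int.castAddHom _).comp
      ((Finsupp.applyAddHom i).comp ((AddMonoidHom.fst _ _).comp f.toAddMonoidHom)), ?_⟩
    simp only [AddMonoidHom.comp_apply, AddMonoidHom.coe_fst, Finsupp.applyAddHom_apply,
      AddEquiv.coe_toAddMonoidHom, Int.coe_castAddHom, ne_eq, ZMod.intCast_zmod_eq_zero_iff_dvd]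
    intro hdvd
    have := Nat.le_of_dvd (Int.natAbs_pos.mpr hi) (Int.natAbs_dvd_natAbs.mpr hdvd)
    omega
  · obtain ⟨i, hi⟩ := DFinsupp.ne_iff.mp htors
    exact ⟨p i ^ e i, pow_ne_zero _ (hp i).ne_zero,
      (DFinsupp.evalAddMonoidHom i).comp ((AddMonoidHom.snd _ _).comp f.toAddMonoidHom), hi⟩

theorem AddCommGroup.exists_addMonoidHom_pi_zmod_ne_zero {A : Type*} [AddCommGroup A]
    [AddGroup.FG A] (T : Finset A) (hT : 0 ∉ T) :
    ∃ N ≠ 0, ∃ φ : A →+ (T → ZMod N), ∀ x ∈ T, φ x ≠ 0 := by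
  have hsep (x : T) : ∃ N ≠ 0, ∃ φ : A →+ ZMod N, φ x ≠ 0 :=
    exists_addMonoidHom_zmod_ne_zero (ne_of_mem_of_not_mem x.2 hT)
  choose M hM φ hφ using hsep
  have hN : ∏ x, M x ≠ 0 := prod_ne_zero_iff.mpr fun x _ => hM x
  have hembed (x : T) : ∃ ι : ZMod (M x) →+ ZMod (∏ x, M x), Function.Injective ι :=
    ZMod.exists_injective_addMonoidHom_of_dvd (dvd_prod_of_mem M (mem_univ x)) hN
  choose ι hι using hembed
  refine ⟨∏ x, M x, hN, AddMonoidHom.pi fun y => (ι y).comp (φ y), fun x hx hφx => hφ ⟨x, hx⟩ ?_⟩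
  exact (injective_iff_map_eq_zero _).mp (hι _) _ (congrFun hφx ⟨x, hx⟩)

theorem exists_isProductFree_subset_of_mulHom_fg {G Q : Type*} [Mul G] [CommGroup Q]
    [Group.FG Q] (π : G →ₙ* Q) (S : Finset G) (hS : ∀ x ∈ S, π x ≠ 1) :
    ∃ A ⊆ S, IsProductFree (A : Set G) ∧ #S ≤ 4 * #A := by
  classical
  obtain ⟨N, hN, φ, hφ⟩ := AddCommGroup.exists_addMonoidHom_pi_zmod_ne_zero
    (S.image fun x => Additive.ofMul (π x)) (by simpa using hS)
  have : NeZero N := ⟨hN⟩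
  refine exists_isProductFree_subset_of_mulHom_zmod
    ((AddMonoidHom.toMultiplicativeRight φ).toMulHom.comp π) S fun x hx => ?_
  simpa using hφ _ (mem_image_of_mem _ hx)

theorem exists_isProductFree_subset_of_monoidHom {G Q : Type*} [Group G] [CommGroup Q]
    (π : G →* Q) (S : Finset G) (hS : ∀ x ∈ S, π x ≠ 1) :
    ∃ A ⊆ S, IsProductFree (A : Set G) ∧ #S ≤ 4 * #A := by
  classical
  -- Cyclic characters separate the points of finitely generated abelian groups, but not of `ℚ`.
  let H := Subgroup.closure (S : Set G)
  refine H.exists_isProductFree_subset_of_subtype (fun x hx => Subgroup.subset_closure hx) ?_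
  refine exists_isProductFree_subset_of_mulHom_fg (π.comp H.subtype).rangeRestrict.toMulHom _
    fun x hx h => hS x (mem_subtype.mp hx) ?_
  simpa using congrArg Subtype.val h

theorem exists_isProductFree_subset_of_forall_notMem_commutator {G : Type*} [Group G]
    (S : Finset G) (hS : ∀ x ∈ S, x ∉ commutator G) :
    ∃ A ⊆ S, IsProductFree (A : Set G) ∧ #S ≤ 4 * #A :=
  exists_isProductFree_subset_of_monoidHom Abelianization.of S fun x hx h =>
    hS x hx (Abelianization.ker_of G ▸ h)

theorem map_subtype_derivedSeries_commutator (G : Type*) [Group G] (n : ℕ) :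
    (derivedSeries (commutator G) n).map (commutator G).subtype = derivedSeries G (n + 1) := by
  induction n with
  | zero => simp [← MonoidHom.range_eq_map]
  | succ n ih => rw [derivedSeries_succ, Subgroup.map_commutator, ih, ← derivedSeries_succ]

theorem derivedSeries_commutator_eq_bot {G : Type*} [Group G] {n : ℕ}
    (h : derivedSeries G (n + 1) = ⊥) : derivedSeries (commutator G) n = ⊥ := by
  rwa [← map_subtype_derivedSeries_commutator,
    Subgroup.map_eq_bot_iff_of_injective _ (Subgroup.subtype_injective _)] at h

theorem exists_isProductFree_subset_of_derivedSeries_eq_bot {G : Type*} [Group G] {n : ℕ}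
    (hG : derivedSeries G (n + 1) = ⊥) {C : Finset G} (hC : 1 ∉ C) :
    ∃ A ⊆ C, IsProductFree (A : Set G) ∧ #C ≤ 4 * 2 ^ n * #A := by
  classical
  induction n generalizing G with
  | zero =>
    simpa using exists_isProductFree_subset_of_forall_notMem_commutator C fun x hx hxK =>
      hC (by rw [← derivedSeries_one, hG, Subgroup.mem_bot] at hxK; exact hxK ▸ hx)
  | succ n ih =>
    set K := commutator G
    have hsplit := card_filter_add_card_filter_not (s := C) (· ∈ K)
    rcases le_or_gt #C (2 * #{x ∈ C | x ∉ K}) with houter | hinner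
    · obtain ⟨A, hAC, hA, hcard⟩ :=
        exists_isProductFree_subset_of_forall_notMem_commutator {x ∈ C | x ∉ K}
          fun x hx => (mem_filter.mp hx).2
      refine ⟨A, hAC.trans (filter_subset _ _), hA, ?_⟩
      calc #C ≤ 2 * (4 * #A) := houter.trans (by omega)
        _ ≤ 4 * 2 ^ (n + 1) * #A := by
          have : 2 ≤ 2 ^ (n + 1) := Nat.le_self_pow (by omega) 2
          nlinarith
    · obtain ⟨A, hAC, hA, hcard⟩ := K.exists_isProductFree_subset_of_subtype
        (S := {x ∈ C | x ∈ K}) (fun x hx => (mem_filter.mp hx).2)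
        (ih (derivedSeries_commutator_eq_bot hG) fun h => hC (mem_filter.mp (mem_subtype.mp h)).1)
      refine ⟨A, hAC.trans (filter_subset _ _), hA, ?_⟩
      calc #C ≤ 2 * (4 * 2 ^ n * #A) := by omega
        _ = 4 * 2 ^ (n + 1) * #A := by ring

theorem stmt15 {G : Type*} [Group G] (n : ℕ) (hG : derivedSeries G (n + 1) = ⊥)
    (C : Finset G) (hC : (1 : G) ∉ C) :
    ∃ A ⊆ C, (∀ x ∈ A, ∀ y ∈ A, x * y ∉ A) ∧
      (1 / 4 : ℝ) * C.card / 2 ^ n ≤ A.card := by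
  obtain ⟨A, hAC, hA, hcard⟩ := exists_isProductFree_subset_of_derivedSeries_eq_bot hG hC
  refine ⟨A, hAC, hA, ?_⟩
  rw [div_le_iff₀ (by positivity)]
  have : (#C : ℝ) ≤ 4 * 2 ^ n * #A := by exact_mod_cast hcard
  linarith
end

section
/- There is an absolute constant C > 0 such that the following holds: for every group G, every finite subset X ⊆ G distinct from {1}, and every real k ≥ 1, if the number of pairs (x,y) ∈ X × X satisfying xy ∈ X is at most k·|X|, then X contains a product-free subset of size at least |X|/(C·k). -/
section aux
variable {G : Type u} [Group G] [DecidableEq G]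

/-- number of (ordered) Schur pairs inside S -/
def tcount (S : Finset G) : ℕ := ((S ×ˢ S).filter (fun p => p.1 * p.2 ∈ S)).card

/-- number of Schur pairs whose triple contains x -/
def deg (S : Finset G) (x : G) : ℕ :=
  ((S ×ˢ S).filter (fun p => p.1 * p.2 ∈ S ∧ (x = p.1 ∨ x = p.2 ∨ x = p.1 * p.2))).card

lemma tcount_mono {S T : Finset G} (h : S ⊆ T) : tcount S ≤ tcount T := by
  apply Finset.card_le_card
  intro p hp
  simp only [Finset.mem_filter, Finset.mem_product] at *
  exact ⟨⟨h hp.1.1, h hp.1.2⟩, h hp.2⟩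

lemma deg_mono {S T : Finset G} (h : S ⊆ T) (x : G) : deg S x ≤ deg T x := by
  apply Finset.card_le_card
  intro p hp
  simp only [Finset.mem_filter, Finset.mem_product] at *
  exact ⟨⟨h hp.1.1, h hp.1.2⟩, h hp.2.1, hp.2.2⟩

lemma sum_deg_le (S : Finset G) : ∑ x ∈ S, deg S x ≤ 3 * tcount S := by
  have h1 : ∀ x, deg S x =
      ∑ p ∈ (S ×ˢ S).filter (fun p => p.1 * p.2 ∈ S),
        (if x = p.1 ∨ x = p.2 ∨ x = p.1 * p.2 then 1 else 0) := by
    intro x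
    rw [← Finset.sum_filter, ← Finset.card_eq_sum_ones, deg, Finset.filter_filter]
  calc ∑ x ∈ S, deg S x
      = ∑ p ∈ (S ×ˢ S).filter (fun p => p.1 * p.2 ∈ S),
          ∑ x ∈ S, (if x = p.1 ∨ x = p.2 ∨ x = p.1 * p.2 then 1 else 0) := by
        simp_rw [h1]; rw [Finset.sum_comm]
    _ ≤ ∑ _p ∈ (S ×ˢ S).filter (fun p => p.1 * p.2 ∈ S), 3 := by
        apply Finset.sum_le_sum
        intro p _
        rw [← Finset.sum_filter, ← Finset.card_eq_sum_ones]
        calc (S.filter (fun x => x = p.1 ∨ x = p.2 ∨ x = p.1 * p.2)).card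
            ≤ ({p.1, p.2, p.1 * p.2} : Finset G).card := by
              apply Finset.card_le_card
              intro x hx
              simp only [Finset.mem_filter, Finset.mem_insert, Finset.mem_singleton] at *
              exact hx.2
          _ ≤ 3 := by
              apply le_trans (Finset.card_insert_le _ _)
              have := Finset.card_insert_le p.2 ({p.1 * p.2} : Finset G)
              simp at this ⊢
              omega
    _ = 3 * tcount S := by rw [Finset.sum_const, smul_eq_mul, mul_comm]; rfl


lemma greedy (d : ℕ) : ∀ n : ℕ, ∀ S : Finset G, S.card ≤ n → (1:G) ∉ S →
    (∀ x ∈ S, deg S x ≤ d) →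
    ∃ A ⊆ S, (∀ a ∈ A, ∀ b ∈ A, a * b ∉ A) ∧ S.card ≤ (3*d+1) * A.card := by
  intro n
  induction n with
  | zero =>
    intro S hS _ _
    exact ⟨∅, Finset.empty_subset _, by simp, by simp [Nat.le_zero.mp hS]⟩
  | succ n ih =>
    intro S hS h1 hdeg
    rcases S.eq_empty_or_nonempty with rfl | ⟨x, hx⟩
    · exact ⟨∅, Finset.empty_subset _, by simp, by simp⟩
    · set E := (S ×ˢ S).filter (fun p => p.1 * p.2 ∈ S ∧ (x = p.1 ∨ x = p.2 ∨ x = p.1 * p.2))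
        with hE
      set N : Finset G := E.biUnion (fun p => {p.1, p.2, p.1 * p.2}) with hN
      have hNcard : N.card ≤ 3 * d := by
        calc N.card ≤ ∑ p ∈ E, ({p.1, p.2, p.1 * p.2} : Finset G).card :=
              Finset.card_biUnion_le
          _ ≤ ∑ _p ∈ E, 3 := by
              apply Finset.sum_le_sum
              intro p _
              apply le_trans (Finset.card_insert_le _ _)
              have := Finset.card_insert_le p.2 ({p.1 * p.2} : Finset G)
              simp at this ⊢
              omega
          _ = 3 * E.card := by rw [Finset.sum_const, smul_eq_mul, mul_comm]
          _ ≤ 3 * d := by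
              have : E.card = deg S x := rfl
              rw [this]
              exact Nat.mul_le_mul_left 3 (hdeg x hx)
      -- key: triples in S containing x have all their elements in N
      have hkey : ∀ u v : G, u ∈ S → v ∈ S → u * v ∈ S →
          (x = u ∨ x = v ∨ x = u * v) → u ∈ N ∧ v ∈ N ∧ u * v ∈ N := by
        intro u v hu hv huv hor
        have hmem : (u, v) ∈ E := by
          simp only [hE, Finset.mem_filter, Finset.mem_product]
          exact ⟨⟨hu, hv⟩, huv, hor⟩
        refine ⟨?_, ?_, ?_⟩ <;>
        · rw [hN, Finset.mem_biUnion]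
          exact ⟨(u, v), hmem, by simp⟩
      set S' := S \ insert x N with hS'
      have hS'sub : S' ⊆ S := Finset.sdiff_subset
      have hS'card : S'.card ≤ n := by
        have hsub : S' ⊆ S.erase x := by
          intro y hy
          rw [hS', Finset.mem_sdiff] at hy
          rw [Finset.mem_erase]
          exact ⟨fun h => hy.2 (by simp [h]), hy.1⟩
        have := Finset.card_le_card hsub
        have := Finset.card_erase_of_mem hx
        omega
      obtain ⟨A', hA'sub, hA'pf, hA'card⟩ := ih S' hS'card
        (fun h => h1 (hS'sub h)) (fun y hy => le_trans (deg_mono hS'sub y) (hdeg y (hS'sub hy)))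
      have hA'S : A' ⊆ S := hA'sub.trans hS'sub
      have hA'x : ∀ a ∈ A', a ≠ x ∧ a ∉ N := by
        intro a ha
        have := hA'sub ha
        rw [hS', Finset.mem_sdiff, Finset.mem_insert] at this
        exact ⟨fun h => this.2 (Or.inl h), fun h => this.2 (Or.inr h)⟩
      refine ⟨insert x A', Finset.insert_subset hx hA'S, ?_, ?_⟩
      · -- product-free
        intro a ha b hb hab
        simp only [Finset.mem_insert] at ha hb hab
        by_cases hcase : x = a ∨ x = b ∨ x = a * b
        · -- all of a, b, a*b lie in N, but elements of A' avoid N and x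
          have haS : a ∈ S := by rcases ha with rfl | h; exact hx; exact hA'S h
          have hbS : b ∈ S := by rcases hb with rfl | h; exact hx; exact hA'S h
          have habS : a * b ∈ S := by
            rcases hab with h | h
            · rw [h]; exact hx
            · exact hA'S h
          obtain ⟨haN, hbN, habN⟩ := hkey a b haS hbS habS hcase
          have ha' : a = x := by
            rcases ha with rfl | h; rfl; exact absurd haN (hA'x a h).2
          have hb' : b = x := by
            rcases hb with rfl | h; rfl; exact absurd hbN (hA'x b h).2
          have hab' : a * b = x := by
            rcases hab with h | h; exact h; exact absurd habN (hA'x _ h).2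
          rw [ha', hb'] at hab'
          have hx1 : x = 1 := by
            have h2 : x * x = x * 1 := by rw [mul_one]; exact hab'
            exact mul_left_cancel h2
          exact h1 (hx1 ▸ hx)
        · push_neg at hcase
          have ha' : a ∈ A' := by
            rcases ha with rfl | h; exact absurd rfl hcase.1; exact h
          have hb' : b ∈ A' := by
            rcases hb with rfl | h; exact absurd rfl hcase.2.1; exact h
          have hab' : a * b ∈ A' := by
            rcases hab with h | h; exact absurd h.symm hcase.2.2; exact h
          exact hA'pf a ha' b hb' hab'
      · -- cardinality
        have hxA' : x ∉ A' := fun h => (hA'x x h).1 rfl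
        rw [Finset.card_insert_of_notMem hxA']
        have h2 : S.card ≤ S'.card + (insert x N).card :=
          Finset.card_le_card_sdiff_add_card
        have h4 : (insert x N).card ≤ 3 * d + 1 := by
          have := Finset.card_insert_le x N
          omega
        calc S.card ≤ S'.card + (insert x N).card := h2
          _ ≤ (3*d+1) * A'.card + (3*d+1) := by omega
          _ = (3*d+1) * (A'.card + 1) := by ring

end aux

theorem stmt16 :
    ∃ C : ℝ, 0 < C ∧
      ∀ (G : Type u) [Group G] [DecidableEq G] (X : Finset G), X ≠ {1} →
        ∀ k : ℝ, 1 ≤ k →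
          ((((X ×ˢ X).filter (fun p => p.1 * p.2 ∈ X)).card : ℝ) ≤ k * X.card) →
          ∃ A ⊆ X, (∀ x ∈ A, ∀ y ∈ A, x * y ∉ A) ∧
            (X.card : ℝ) / (C * k) ≤ A.card := by
  refine ⟨100, by norm_num, ?_⟩
  intro G _ _ X hX1 k hk hcount
  have hk0 : (0:ℝ) < 100 * k := by linarith
  by_cases hn3 : X.card ≤ 3
  · -- small case: a singleton ≠ 1 works
    rcases X.eq_empty_or_nonempty with rfl | hne
    · exact ⟨∅, Finset.empty_subset _, by simp, by simp⟩
    · obtain ⟨x, hx, hx1⟩ : ∃ x ∈ X, x ≠ 1 := by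
        by_contra h
        push_neg at h
        exact hX1 (Finset.eq_singleton_iff_nonempty_unique_mem.mpr ⟨hne, h⟩)
      refine ⟨{x}, Finset.singleton_subset_iff.mpr hx, ?_, ?_⟩
      · intro a ha b hb hab
        simp only [Finset.mem_singleton] at ha hb hab
        rw [ha, hb] at hab
        apply hx1
        have h2 : x * x = x * 1 := by rw [mul_one]; exact hab
        exact mul_left_cancel h2
      · rw [Finset.card_singleton]
        have h3 : (X.card : ℝ) ≤ 3 := by exact_mod_cast hn3
        rw [div_le_iff₀ hk0]
        push_cast
        linarith
  · push_neg at hn3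
    have hn4 : 4 ≤ X.card := hn3
    set X₀ := X.erase 1 with hX₀
    set d : ℕ := ⌈6 * k⌉₊ with hd
    have hd1 : 6 * k ≤ (d:ℝ) := Nat.le_ceil _
    have hd2 : (d:ℝ) < 6 * k + 1 := Nat.ceil_lt_add_one (by linarith)
    set B := X₀.filter (fun x => deg X₀ x ≤ d) with hB
    set bad := X₀.filter (fun x => ¬ deg X₀ x ≤ d) with hbad
    have hBbad : B.card + bad.card = X₀.card :=
      Finset.card_filter_add_card_filter_not _
    have hsum1 : bad.card * (d+1) ≤ ∑ x ∈ bad, deg X₀ x := by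
      have := Finset.card_nsmul_le_sum bad (fun x => deg X₀ x) (d+1)
        (fun x hx => by
          rw [hbad, Finset.mem_filter] at hx
          show d + 1 ≤ deg X₀ x
          omega)
      simpa using this
    have hsum2 : ∑ x ∈ bad, deg X₀ x ≤ ∑ x ∈ X₀, deg X₀ x :=
      Finset.sum_le_sum_of_subset (Finset.filter_subset _ _)
    have hsum3 : ∑ x ∈ X₀, deg X₀ x ≤ 3 * tcount X₀ := sum_deg_le X₀
    have hT0 : tcount X₀ ≤ tcount X := tcount_mono (Finset.erase_subset _ _)
    have hT : ((tcount X : ℕ) : ℝ) ≤ k * X.card := by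
      unfold tcount; exact hcount
    -- real versions
    have hbadR : (bad.card : ℝ) * ((d:ℝ)+1) ≤ 3 * (k * X.card) := by
      have h5 : ((bad.card * (d+1) : ℕ) : ℝ) ≤ ((3 * tcount X : ℕ) : ℝ) := by
        exact_mod_cast le_trans hsum1 (le_trans hsum2 (le_trans hsum3 (by omega)))
      push_cast at h5
      linarith
    have hbadhalf : (bad.card : ℝ) ≤ (X.card : ℝ) / 2 := by
      have hdpos : (0:ℝ) < (d:ℝ) + 1 := by positivity
      rw [le_div_iff₀ (by norm_num : (0:ℝ) < 2)]
      nlinarith [Nat.cast_nonneg (α := ℝ) bad.card, Nat.cast_nonneg (α := ℝ) X.card]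
    have hX₀card : (X.card : ℝ) - 1 ≤ (X₀.card : ℝ) := by
      have : X.card ≤ X₀.card + 1 := by
        have h6 : X ⊆ insert 1 X₀ := by
          intro y hy
          rw [Finset.mem_insert, hX₀, Finset.mem_erase]
          by_cases hy1 : y = 1
          · exact Or.inl hy1
          · exact Or.inr ⟨hy1, hy⟩
        exact le_trans (Finset.card_le_card h6) (Finset.card_insert_le _ _)
      have h9 : (X.card : ℝ) ≤ (X₀.card : ℝ) + 1 := by exact_mod_cast this
      linarith
    -- greedy
    have h1B : (1:G) ∉ B := by
      intro h
      rw [hB, Finset.mem_filter, hX₀, Finset.mem_erase] at h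
      exact h.1.1 rfl
    have hdegB : ∀ x ∈ B, deg B x ≤ d := by
      intro x hx
      rw [hB, Finset.mem_filter] at hx
      exact le_trans (deg_mono (Finset.filter_subset _ _) x) hx.2
    obtain ⟨A, hAB, hApf, hAcard⟩ := greedy d B.card B le_rfl h1B hdegB
    refine ⟨A, hAB.trans ((Finset.filter_subset _ _).trans (Finset.erase_subset _ _)),
      hApf, ?_⟩
    -- final arithmetic
    have hAcardR : (B.card : ℝ) ≤ (3*(d:ℝ)+1) * A.card := by
      exact_mod_cast hAcard
    have hBR : (X.card : ℝ) / 4 ≤ (B.card : ℝ) := by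
      have h7 : (B.card : ℝ) + bad.card = X₀.card := by exact_mod_cast hBbad
      have h8 : (4:ℝ) ≤ X.card := by exact_mod_cast hn4
      linarith
    rw [div_le_iff₀ hk0]
    have hA0 : (0:ℝ) ≤ (A.card : ℝ) := Nat.cast_nonneg _
    nlinarith
end
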